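/- arXiv:1904.00190 — 7 statements merged into one kernel-verified Lean document; each statement's English description precedes it below -/
import Mathlib

section
/- For positive integers p, m, n and complex s with Re(s) > 0, (Γ(s+p)/(p−1)!) · ∫₀¹ x^{p−1} (mx+n)^{−(p+s)} dx = Γ(s)/(m^p n^s) − ∑_{r=0}^{p−1} (1/r!) · Γ(s+r)/(m^{p−r}(m+n)^{s+r}). -/
/-!
With `t = a x`, the partial sums `Φ_p(x) = ∑_{r<p} Γ(s+r)/r! · t^r (t+b)^{-(s+r)}` of the
negative binomial expansion of `Γ(s) b^{-s}` in powers of `t/(t+b)` have telescoping derivatives,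
`Φ_p' = -a · Γ(s+p)/(p-1)! · t^{p-1} (t+b)^{-(s+p)}`. Hence the integral equals `Φ_p(0) - Φ_p(1)`,
where `Φ_p(0) = Γ(s) b^{-s}` and `Φ_p(1)` is the finite sum.
-/

open Complex Finset intervalIntegral
open scoped Nat

section
variable {a b : ℝ} {s : ℂ}

lemma mul_add_pos_of_mem_Icc (hb : 0 < b) (hab : 0 < a + b) {x : ℝ} (hx : x ∈ Set.Icc (0 : ℝ) 1) :
    0 < a * x + b := by
  rcases le_or_gt 0 a with ha | ha <;> nlinarith [hx.1, hx.2]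

lemma hasDerivAt_ofReal_mul (a x : ℝ) : HasDerivAt (fun x : ℝ => ((a * x : ℝ) : ℂ)) a x := by
  simpa using ((hasDerivAt_id x).const_mul a).ofReal_comp

lemma hasDerivAt_ofReal_mul_add_cpow (c : ℂ) {x : ℝ} (hx : 0 < a * x + b) :
    HasDerivAt (fun x : ℝ => ((a * x + b : ℝ) : ℂ) ^ c)
      (c * ((a * x + b : ℝ) : ℂ) ^ (c - 1) * a) x := by
  have hlin : HasDerivAt (fun x : ℝ => ((a * x + b : ℝ) : ℂ)) a x := by
    simpa using (((hasDerivAt_id x).const_mul a).add_const b).ofReal_comp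
  exact (hasStrictDerivAt_cpow_const (Or.inl (by simpa using hx))).hasDerivAt.comp x hlin

/-- For fixed `x`, these sum over all `r` to `Γ(s) b^{-s}`: the binomial series of
`(1 - t/(t+b))^{-s}` with `t = a x`. -/
noncomputable def negBinomialTerm (a b : ℝ) (s : ℂ) (r : ℕ) (x : ℝ) : ℂ :=
  Complex.Gamma (s + r) / r ! * ((a * x : ℝ) : ℂ) ^ r * ((a * x + b : ℝ) : ℂ) ^ (-(s + r))

/-- The factor `r` makes the kernel vanish at `r = 0` despite the truncated `r - 1`; for `r ≥ 1` it
is `Γ(s+r)/(r-1)! · t^{r-1} (t+b)^{-(s+r)}`. -/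
noncomputable def negBinomialKernel (a b : ℝ) (s : ℂ) (r : ℕ) (x : ℝ) : ℂ :=
  r * Complex.Gamma (s + r) / r ! * ((a * x : ℝ) : ℂ) ^ (r - 1) * ((a * x + b : ℝ) : ℂ) ^ (-(s + r))

@[simp]
lemma negBinomialKernel_zero (x : ℝ) : negBinomialKernel a b s 0 x = 0 := by
  simp [negBinomialKernel]

lemma negBinomialKernel_succ {r : ℕ} (hs : s + r ≠ 0) (x : ℝ) :
    negBinomialKernel a b s (r + 1) x = (s + r) * Complex.Gamma (s + r) / r ! *
      ((a * x : ℝ) : ℂ) ^ r * ((a * x + b : ℝ) : ℂ) ^ (-(s + r) - 1) := by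
  have hfac : ((r + 1)! : ℂ) = (r + 1) * r ! := by push_cast [Nat.factorial_succ]; ring
  rw [negBinomialKernel, hfac, Nat.add_sub_cancel, Nat.cast_succ, ← add_assoc,
    Complex.Gamma_add_one _ hs, neg_add', mul_div_mul_left _ _ (Nat.cast_add_one_ne_zero r)]

lemma hasDerivAt_negBinomialTerm {r : ℕ} (hs : s + r ≠ 0) {x : ℝ} (hx : 0 < a * x + b) :
    HasDerivAt (negBinomialTerm a b s r)
      (a * (negBinomialKernel a b s r x - negBinomialKernel a b s (r + 1) x)) x := by
  have h := (((hasDerivAt_pow r _).comp x (hasDerivAt_ofReal_mul a x)).const_mul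
    (Complex.Gamma (s + r) / r !)).mul (hasDerivAt_ofReal_mul_add_cpow (-(s + r)) hx)
  refine h.congr_deriv ?_
  rw [negBinomialKernel_succ hs, negBinomialKernel]
  simp only [Function.comp_apply]
  ring

lemma continuousOn_negBinomialKernel (hb : 0 < b) (hab : 0 < a + b) (r : ℕ) :
    ContinuousOn (negBinomialKernel a b s r) (Set.uIcc 0 1) := by
  intro x hx
  rw [Set.uIcc_of_le zero_le_one] at hx
  have hcpow := (hasDerivAt_ofReal_mul_add_cpow (-(s + r))
    (mul_add_pos_of_mem_Icc hb hab hx)).continuousAt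
  unfold negBinomialKernel
  fun_prop

theorem integral_mul_negBinomialKernel (hb : 0 < b) (hab : 0 < a + b)
    {p : ℕ} (hs : ∀ r < p, s + r ≠ 0) :
    ∫ x in (0 : ℝ)..1, a * negBinomialKernel a b s p x =
      ∑ r ∈ range p, negBinomialTerm a b s r 0 - ∑ r ∈ range p, negBinomialTerm a b s r 1 := by
  have hderiv : ∀ x ∈ Set.uIcc (0 : ℝ) 1, HasDerivAt
      (fun x => -∑ r ∈ range p, negBinomialTerm a b s r x) (a * negBinomialKernel a b s p x) x := by
    intro x hx
    rw [Set.uIcc_of_le zero_le_one] at hx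
    have hsum := HasDerivAt.fun_sum (u := range p) fun r hr =>
      hasDerivAt_negBinomialTerm (hs r (mem_range.1 hr)) (mul_add_pos_of_mem_Icc hb hab hx)
    refine hsum.fun_neg.congr_deriv ?_
    rw [← mul_sum, sum_range_sub', negBinomialKernel_zero]
    ring
  rw [integral_eq_sub_of_hasDerivAt hderiv
    ((continuousOn_negBinomialKernel hb hab p).const_mul _).intervalIntegrable]
  ring

lemma sum_negBinomialTerm_zero {p : ℕ} (hp : 0 < p) :
    ∑ r ∈ range p, negBinomialTerm a b s r 0 = Complex.Gamma s * (b : ℂ) ^ (-s) := by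
  rw [← Nat.sub_add_cancel hp, sum_range_succ']
  simp [negBinomialTerm]

lemma mul_negBinomialKernel {p : ℕ} (hp : 0 < p) (x : ℝ) :
    a * negBinomialKernel a b s p x = a ^ p * (Complex.Gamma (s + p) / (p - 1)! *
      ((x : ℂ) ^ (p - 1) * ((a * x + b : ℝ) : ℂ) ^ (-((p : ℂ) + s)))) := by
  obtain ⟨q, rfl⟩ := Nat.exists_eq_add_one_of_ne_zero hp.ne'
  rw [negBinomialKernel, Nat.factorial_succ]
  push_cast
  field_simp
  ring_nf

theorem gamma_mul_integral_pow_mul_cpow {p : ℕ} (hp : 0 < p) (ha : a ≠ 0) (hb : 0 < b)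
    (hab : 0 < a + b) (hs : ∀ r < p, s + r ≠ 0) :
    Complex.Gamma (s + p) / (p - 1)! *
        ∫ x in (0 : ℝ)..1, (x : ℂ) ^ (p - 1) * ((a * x + b : ℝ) : ℂ) ^ (-((p : ℂ) + s)) =
      Complex.Gamma s / ((a : ℂ) ^ p * (b : ℂ) ^ s) -
        ∑ r ∈ range p, 1 / (r ! : ℂ) *
          (Complex.Gamma (s + r) / ((a : ℂ) ^ (p - r) * ((a : ℂ) + b) ^ (s + r))) := by
  have key := integral_mul_negBinomialKernel hb hab hs
  simp only [mul_negBinomialKernel hp, intervalIntegral.integral_const_mul,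
    sum_negBinomialTerm_zero hp] at key
  have ha' : (a : ℂ) ≠ 0 := ofReal_ne_zero.2 ha
  rw [← mul_right_inj' (pow_ne_zero p ha'), key, mul_sub, mul_sum, cpow_neg]
  congr 1
  · field_simp
  · refine sum_congr rfl fun r hr => ?_
    rw [negBinomialTerm, ← pow_mul_pow_sub _ (mem_range.1 hr).le, cpow_neg]
    push_cast
    field_simp
end

/-- For positive integers `p, m, n` and `Re s > 0`,
`(Γ(s+p)/(p-1)!) ∫₀¹ x^{p-1} (mx+n)^{-(p+s)} dx
  = Γ(s)/(m^p n^s) - ∑_{r=0}^{p-1} (1/r!) Γ(s+r)/(m^{p-r} (m+n)^{s+r})`. -/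
theorem hypergeometric_integral_identity (p m n : ℕ) (hp : 0 < p) (hm : 0 < m)
    (hn : 0 < n) (s : ℂ) (hs : 0 < s.re) :
    (Complex.Gamma (s + p) / (Nat.factorial (p - 1) : ℂ)) *
        ∫ x in (0:ℝ)..1,
          (x : ℂ) ^ (p - 1) * (((m : ℝ) * x + n : ℝ) : ℂ) ^ (-((p : ℂ) + s)) =
      Complex.Gamma s / ((m : ℂ) ^ p * (n : ℂ) ^ s) -
        ∑ r ∈ Finset.range p,
          (1 / (Nat.factorial r : ℂ)) *
            (Complex.Gamma (s + r) /
              ((m : ℂ) ^ (p - r) * ((m : ℂ) + (n : ℂ)) ^ (s + r))) := by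
  have hs_add : ∀ r < p, s + r ≠ 0 := fun r _ h => by
    have := congrArg Complex.re h
    simp only [add_re, natCast_re, zero_re] at this
    linarith [(Nat.cast_nonneg r : (0 : ℝ) ≤ r)]
  have h := gamma_mul_integral_pow_mul_cpow (a := m) (b := n) hp (by positivity) (by positivity)
    (by positivity) hs_add
  simpa only [ofReal_natCast] using h
end

section
/- Let θ₁,...,θ_r : (0,∞) → ℂ be continuous, tending to zero exponentially fast as t → ∞, and satisfying θᵢ(1/t) = εᵢ t^{wᵢ} θᵢ(t) with εᵢ ∈ {±1}. Define Λ(θ₁,...,θ_r; s₁,...,s_r) as the iterated integral ∫_{0≤t₁≤...≤t_r≤∞} ∏ᵢ θᵢ(tᵢ)tᵢ^{sᵢ−1}dtᵢ. Then Λ(θ₁,...,θ_r; s₁,...,s_r) = ε₁···ε_r · Λ(θ_r,...,θ₁; w_r−s_r,...,w₁−s₁). -/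
open Complex Real MeasureTheory

/-- Iterated integral `∫_{0 ≤ t₁ ≤ ⋯ ≤ t_k ≤ T} ∏ θᵢ(tᵢ) tᵢ^{sᵢ-1} dtᵢ`, where the
list is given in *reverse* order: the head of the list is the outermost (largest)
variable. -/
noncomputable def iterMellinUpTo : List ((ℝ → ℂ) × ℂ) → ℝ → ℂ
  | [], _ => 1
  | (θ, s) :: rest, T =>
      ∫ t in Set.Ioc (0 : ℝ) T, θ t * (t : ℂ) ^ (s - 1) * iterMellinUpTo rest t

/-- The full iterated Mellin transform `Λ`: the simplex integral over
`0 ≤ t₁ ≤ ⋯ ≤ t_k < ∞`, the list being in reverse order (head = outermost). -/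
noncomputable def iterMellin : List ((ℝ → ℂ) × ℂ) → ℂ
  | [] => 1
  | (θ, s) :: rest =>
      ∫ t in Set.Ioi (0 : ℝ), θ t * (t : ℂ) ^ (s - 1) * iterMellinUpTo rest t

/-!
Extend `θᵢ(t) t^{sᵢ-1}` by zero to a function `Fᵢ` on `ℝ` and write `Λ` as an integral of
`∏ Fᵢ(tᵢ)` over the simplex `t₁ ≤ ⋯ ≤ t_r`, nested with `t_r` outermost. The substitution
`tᵢ ↦ 1/tᵢ`, with its Jacobian `tᵢ⁻²` and the inversion relation, turns `Fᵢ` into `εᵢ Gᵢ`, where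
`Gᵢ(t) = θᵢ(t) t^{wᵢ-sᵢ-1}`, and reverses the order of the variables; Fubini, pulling the
innermost variable outwards one step at a time, restores the nesting. Everything converges
because `θᵢ` decays faster than any power at `∞` and, by the inversion relation, at `0`, so each
`Fᵢ` is integrable and the nested integrals are bounded by products of `L¹` norms.
-/

open Set Filter Topology Asymptotics
open scoped Pointwise

theorem setIntegral_mul_setIntegral_eq_integral_integral_indicator {α β : Type*}
    [MeasurableSpace α] [MeasurableSpace β] {μ : Measure α} {ν : Measure β} {f : α → ℂ}
    {h : α → β → ℂ} {S : Set α} (hS : MeasurableSet S) {T : α → Set β}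
    (hT : ∀ t, MeasurableSet (T t)) :
    ∫ t in S, f t * ∫ u in T t, h t u ∂ν ∂μ =
      ∫ t, ∫ u, {z : α × β | z.1 ∈ S ∧ z.2 ∈ T z.1}.indicator
        (fun z => f z.1 * h z.1 z.2) (t, u) ∂ν ∂μ := by
  rw [← integral_indicator hS]
  congr 1
  funext t
  by_cases ht : t ∈ S
  · rw [indicator_of_mem ht, ← integral_const_mul, ← integral_indicator (hT t)]
    congr 1
    funext u
    by_cases hu : u ∈ T t <;> simp [ht, hu]
  · simp [ht]

section SimplexIntegral

variable (μ : Measure ℝ)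

noncomputable def simplexIntegral : List (ℝ → ℂ) → Set ℝ → ℂ
  | [], _ => 1
  | f :: fs, S => ∫ t in S, f t * simplexIntegral fs (S ∩ Iic t) ∂μ

variable {μ}

theorem norm_simplexIntegral_le {fs : List (ℝ → ℂ)} (hfs : ∀ f ∈ fs, Integrable f μ)
    (S : Set ℝ) : ‖simplexIntegral μ fs S‖ ≤ (fs.map fun f => ∫ t, ‖f t‖ ∂μ).prod := by
  induction fs generalizing S with
  | nil => simp [simplexIntegral]
  | cons f fs ih =>
    rw [List.forall_mem_cons] at hfs
    set B := (fs.map fun f => ∫ t, ‖f t‖ ∂μ).prod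
    have hB : 0 ≤ B := List.prod_nonneg <| by
      simp only [List.mem_map]
      rintro _ ⟨g, -, rfl⟩
      exact integral_nonneg fun _ => norm_nonneg _
    calc ‖simplexIntegral μ (f :: fs) S‖
        ≤ ∫ t in S, ‖f t‖ * B ∂μ := by
          refine norm_integral_le_of_norm_le (hfs.1.norm.mul_const B).integrableOn
            (ae_of_all _ fun t => ?_)
          rw [norm_mul]
          exact mul_le_mul_of_nonneg_left (ih hfs.2 _) (norm_nonneg _)
      _ = (∫ t in S, ‖f t‖ ∂μ) * B := integral_mul_const _ _
      _ ≤ (∫ t, ‖f t‖ ∂μ) * B := mul_le_mul_of_nonneg_right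
          (setIntegral_le_integral hfs.1.norm (ae_of_all _ fun _ => norm_nonneg _)) hB
      _ = _ := rfl

theorem stronglyMeasurable_simplexIntegral_inter_Ici_inter_Iic [SFinite μ]
    {fs : List (ℝ → ℂ)} (hfs : ∀ f ∈ fs, StronglyMeasurable f) {S : Set ℝ}
    (hS : MeasurableSet S) :
    StronglyMeasurable fun p : ℝ × ℝ => simplexIntegral μ fs (S ∩ Ici p.1 ∩ Iic p.2) := by
  induction fs with
  | nil => exact stronglyMeasurable_const
  | cons f fs ih =>
    rw [List.forall_mem_cons] at hfs
    let R : Set ((ℝ × ℝ) × ℝ) := {q | q.2 ∈ S ∧ q.1.1 ≤ q.2 ∧ q.2 ≤ q.1.2}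
    have hR : MeasurableSet R := (hS.preimage measurable_snd).inter
      ((measurableSet_le measurable_fst.fst measurable_snd).inter
        (measurableSet_le measurable_snd measurable_fst.snd))
    have h : (fun p : ℝ × ℝ => simplexIntegral μ (f :: fs) (S ∩ Ici p.1 ∩ Iic p.2)) =
        fun p => ∫ x, R.indicator
          (fun q => f q.2 * simplexIntegral μ fs (S ∩ Ici q.1.1 ∩ Iic q.2)) (p, x) ∂μ := by
      funext p
      rw [simplexIntegral,
        ← integral_indicator ((hS.inter measurableSet_Ici).inter measurableSet_Iic)]
      congr 1
      funext x
      by_cases hx : x ∈ S ∩ Ici p.1 ∩ Iic p.2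
      · have hxR : ((p, x) : (ℝ × ℝ) × ℝ) ∈ R := ⟨hx.1.1, hx.1.2, hx.2⟩
        rw [indicator_of_mem hx, indicator_of_mem hxR, inter_assoc (S ∩ Ici p.1),
          Iic_inter_Iic, min_eq_right hx.2]
      · have hxR : ((p, x) : (ℝ × ℝ) × ℝ) ∉ R := fun h => hx ⟨⟨h.1, h.2.1⟩, h.2.2⟩
        rw [indicator_of_notMem hx, indicator_of_notMem hxR]
    rw [h]
    refine StronglyMeasurable.integral_prod_right' (StronglyMeasurable.indicator ?_ hR)
    exact (hfs.1.comp_measurable measurable_snd).mul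
      ((ih hfs.2).comp_measurable (measurable_fst.fst.prodMk measurable_snd))

/-- Both sides integrate `f t * g u * K u t` over `{(t, u) ∈ S × S | u ≤ t}`. -/
theorem setIntegral_mul_setIntegral_Iic_comm [SFinite μ] {f g : ℝ → ℂ} {K : ℝ → ℝ → ℂ}
    {B : ℝ} (hf : Integrable f μ) (hg : Integrable g μ)
    (hK : StronglyMeasurable fun z : ℝ × ℝ => K z.1 z.2) (hKB : ∀ u t, ‖K u t‖ ≤ B)
    {S : Set ℝ} (hS : MeasurableSet S) :
    ∫ t in S, f t * ∫ u in S ∩ Iic t, g u * K u t ∂μ ∂μ =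
      ∫ u in S, g u * ∫ t in S ∩ Ici u, f t * K u t ∂μ ∂μ := by
  let R : Set (ℝ × ℝ) := {z | z.1 ∈ S ∧ z.2 ∈ S ∩ Iic z.1}
  have hR : MeasurableSet R := (hS.preimage measurable_fst).inter
    ((hS.preimage measurable_snd).inter (measurableSet_le measurable_snd measurable_fst))
  have hint : Integrable (Function.uncurry fun t u =>
      R.indicator (fun z => f z.1 * (g z.2 * K z.2 z.1)) (t, u)) (μ.prod μ) := by
    refine Integrable.indicator ?_ hR
    refine ((hf.norm.mul_prod hg.norm).mul_const B).mono'
      (hf.aestronglyMeasurable.comp_fst.mul (hg.aestronglyMeasurable.comp_snd.mul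
        (hK.comp_measurable measurable_swap).aestronglyMeasurable)) (ae_of_all _ fun z => ?_)
    simp only [norm_mul, mul_assoc]
    exact mul_le_mul_of_nonneg_left (mul_le_mul_of_nonneg_left (hKB _ _) (norm_nonneg _))
      (norm_nonneg _)
  rw [setIntegral_mul_setIntegral_eq_integral_integral_indicator hS
      (fun t => hS.inter measurableSet_Iic),
    setIntegral_mul_setIntegral_eq_integral_integral_indicator hS
      (fun u => hS.inter measurableSet_Ici),
    integral_integral_swap hint]
  congr 1
  funext u
  congr 1
  funext t
  classical
  simp only [R, indicator_apply, mem_ofPred_eq, mem_inter_iff, mem_Iic, mem_Ici]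
  split_ifs <;> first | ring1 | tauto

theorem simplexIntegral_append_singleton [SFinite μ] {fs : List (ℝ → ℂ)}
    (hfs : ∀ f ∈ fs, StronglyMeasurable f ∧ Integrable f μ) {g : ℝ → ℂ}
    (hg : Integrable g μ) {S : Set ℝ} (hS : MeasurableSet S) :
    simplexIntegral μ (fs ++ [g]) S = ∫ u in S, g u * simplexIntegral μ fs (S ∩ Ici u) ∂μ := by
  induction fs generalizing S with
  | nil => rfl
  | cons f fs ih =>
    rw [List.forall_mem_cons] at hfs
    have hK := stronglyMeasurable_simplexIntegral_inter_Ici_inter_Iic (μ := μ)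
      (fun f hf => (hfs.2 f hf).1) hS
    have hKB := norm_simplexIntegral_le (fun f hf => (hfs.2 f hf).2)
    calc simplexIntegral μ (f :: fs ++ [g]) S
        = ∫ t in S, f t * ∫ u in S ∩ Iic t,
            g u * simplexIntegral μ fs (S ∩ Ici u ∩ Iic t) ∂μ ∂μ := by
          show ∫ t in S, f t * simplexIntegral μ (fs ++ [g]) (S ∩ Iic t) ∂μ = _
          refine setIntegral_congr_fun hS fun t _ => ?_
          rw [ih hfs.2 (hS.inter measurableSet_Iic)]
          simp only [inter_right_comm]
      _ = _ := setIntegral_mul_setIntegral_Iic_comm (K := fun u t =>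
          simplexIntegral μ fs (S ∩ Ici u ∩ Iic t)) hfs.1.2 hg hK (fun _ _ => hKB _) hS

end SimplexIntegral

theorem setIntegral_eq_setIntegral_inv {E : Type*} [NormedAddCommGroup E] [NormedSpace ℝ E]
    (g : ℝ → E) {S : Set ℝ} (hS : MeasurableSet S) (h0 : (0 : ℝ) ∉ S) :
    ∫ x in S, g x = ∫ u in S⁻¹, ((u ^ 2)⁻¹ : ℝ) • g u⁻¹ := by
  have hderiv : ∀ u ∈ S⁻¹, HasDerivWithinAt Inv.inv (-(u ^ 2)⁻¹) S⁻¹ u := fun u hu =>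
    (hasDerivAt_inv fun hu0 => h0 (by simpa [hu0] using hu)).hasDerivWithinAt
  have h := integral_image_eq_integral_abs_deriv_smul hS.inv hderiv inv_injective.injOn g
  rw [image_inv_eq_inv, inv_inv] at h
  simpa only [abs_neg, abs_inv, abs_sq] using h

theorem inv_inter_Iic_inv {S : Set ℝ} (hS : S ⊆ Ioi 0) {u : ℝ} (hu : 0 < u) :
    (S ∩ Iic u⁻¹)⁻¹ = S⁻¹ ∩ Ici u := by
  ext x
  simp only [inter_inv, mem_inter_iff, Set.mem_inv, mem_Iic, mem_Ici, and_congr_right_iff]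
  exact fun hx => inv_le_inv₀ (inv_pos.1 (hS hx)) hu

theorem simplexIntegral_reverse_ofFn_eq_prod_mul {r : ℕ} (f g : Fin r → ℝ → ℂ) (ε : Fin r → ℂ)
    (hgm : ∀ i, StronglyMeasurable (g i)) (hgi : ∀ i, Integrable (g i))
    (hfg : ∀ i, ∀ u : ℝ, 0 < u → ((u ^ 2)⁻¹ : ℝ) • f i u⁻¹ = ε i * g i u)
    {S : Set ℝ} (hS : MeasurableSet S) (hS0 : S ⊆ Ioi 0) :
    simplexIntegral volume (List.ofFn f).reverse S =
      (∏ i, ε i) * simplexIntegral volume (List.ofFn g) S⁻¹ := by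
  induction r generalizing S with
  | zero => simp [simplexIntegral]
  | succ r ih =>
    have hgs : ∀ h ∈ List.ofFn fun i => g i.castSucc, StronglyMeasurable h ∧ Integrable h := by
      simp only [List.mem_ofFn]
      rintro _ ⟨i, rfl⟩
      exact ⟨hgm _, hgi _⟩
    have hinner : ∀ u ∈ S⁻¹, ((u ^ 2)⁻¹ : ℝ) • (f (Fin.last r) u⁻¹ *
        simplexIntegral volume (List.ofFn fun i => f i.castSucc).reverse (S ∩ Iic u⁻¹)) =
        (ε (Fin.last r) * ∏ i : Fin r, ε i.castSucc) * (g (Fin.last r) u *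
          simplexIntegral volume (List.ofFn fun i => g i.castSucc) (S⁻¹ ∩ Ici u)) := by
      intro u hu
      have hu0 : 0 < u := inv_pos.1 (hS0 hu)
      rw [ih _ _ _ (fun i => hgm _) (fun i => hgi _) (fun i => hfg _)
        (hS.inter measurableSet_Iic) (inter_subset_left.trans hS0), inv_inter_Iic_inv hS0 hu0,
        ← smul_mul_assoc, hfg _ u hu0]
      ring
    -- after `t ↦ 1/t` the outermost variable has become the smallest one
    rw [List.ofFn_succ', List.concat_eq_append, List.reverse_append, List.reverse_singleton,
      List.singleton_append, simplexIntegral,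
      setIntegral_eq_setIntegral_inv _ hS fun h0 => (hS0 h0).out.false,
      setIntegral_congr_fun hS.inv hinner, integral_const_mul,
      ← simplexIntegral_append_singleton hgs (hgi _) hS.inv, Fin.prod_univ_castSucc,
      mul_comm (ε _), List.ofFn_succ' g, List.concat_eq_append]

/-- Extended by zero to `t ≤ 0`, so that it is measurable when `θ` is only controlled on
`(0, ∞)`. -/
noncomputable def mellinIntegrand (θ : ℝ → ℂ) (s : ℂ) : ℝ → ℂ :=
  (Ioi 0).indicator fun t => θ t * (t : ℂ) ^ (s - 1)

theorem iterMellinUpTo_eq_simplexIntegral (L : List ((ℝ → ℂ) × ℂ)) (T : ℝ) :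
    iterMellinUpTo L T =
      simplexIntegral volume (L.map fun p => mellinIntegrand p.1 p.2) (Ioc 0 T) := by
  induction L generalizing T with
  | nil => rfl
  | cons p L ih =>
    refine setIntegral_congr_fun measurableSet_Ioc fun t ht => ?_
    beta_reduce
    rw [mellinIntegrand, indicator_of_mem (show t ∈ Ioi 0 from ht.1), Ioc_inter_Iic,
      min_eq_right ht.2, ih]

theorem iterMellin_eq_simplexIntegral (L : List ((ℝ → ℂ) × ℂ)) :
    iterMellin L = simplexIntegral volume (L.map fun p => mellinIntegrand p.1 p.2) (Ioi 0) := by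
  cases L with
  | nil => rfl
  | cons p L =>
    refine setIntegral_congr_fun measurableSet_Ioi fun t ht => ?_
    beta_reduce
    rw [mellinIntegrand, indicator_of_mem ht, Ioi_inter_Iic, iterMellinUpTo_eq_simplexIntegral]

section Mellin

variable {θ : ℝ → ℂ}

theorem stronglyMeasurable_mellinIntegrand (hc : ContinuousOn θ (Ioi 0)) (s : ℂ) :
    StronglyMeasurable (mellinIntegrand θ s) := by
  refine Measurable.stronglyMeasurable ?_
  unfold mellinIntegrand
  rw [← piecewise_eq_indicator]
  refine ContinuousOn.measurable_piecewise ?_ continuousOn_const measurableSet_Ioi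
  exact hc.mul fun t ht =>
    (continuousAt_ofReal_cpow_const t _ (Or.inr ht.out.ne')).continuousWithinAt

theorem MellinConvergent.integrable_mellinIntegrand {s : ℂ} (h : MellinConvergent θ s) :
    Integrable (mellinIntegrand θ s) :=
  (integrable_indicator_iff (measurableSet_Ioi (a := (0 : ℝ)))).2 <| by
    simpa only [MellinConvergent, smul_eq_mul, mul_comm] using h

theorem inv_sq_smul_mellinIntegrand_inv {ε w : ℂ}
    (hinv : ∀ t : ℝ, 0 < t → θ (1 / t) = ε * (t : ℂ) ^ w * θ t) (s : ℂ) {u : ℝ} (hu : 0 < u) :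
    ((u ^ 2)⁻¹ : ℝ) • mellinIntegrand θ s u⁻¹ = ε * mellinIntegrand θ (w - s) u := by
  have hu' : (u : ℂ) ≠ 0 := ofReal_ne_zero.2 hu.ne'
  have harg : (u : ℂ).arg ≠ π := by
    rw [arg_ofReal_of_nonneg hu.le]
    exact pi_pos.ne
  have hexp : (u : ℂ) ^ (w - s - 1) = (u : ℂ) ^ w * ((u : ℂ) ^ (s - 1))⁻¹ * ((u : ℂ) ^ 2)⁻¹ := by
    rw [← cpow_neg, ← cpow_natCast, ← cpow_neg, ← cpow_add _ _ hu', ← cpow_add _ _ hu']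
    congr 1
    push_cast
    ring
  rw [mellinIntegrand, mellinIntegrand, indicator_of_mem (show u⁻¹ ∈ Ioi 0 from inv_pos.2 hu),
    indicator_of_mem (show u ∈ Ioi 0 from hu), ← one_div u, hinv u hu, one_div, ofReal_inv,
    inv_cpow _ _ harg, real_smul, hexp]
  push_cast
  ring

theorem isBigO_rpow_atTop_of_exp_decay {C a : ℝ} (ha : 0 < a)
    (hθ : ∀ t : ℝ, 1 ≤ t → ‖θ t‖ ≤ C * Real.exp (-a * t)) (r : ℝ) :
    θ =O[atTop] (· ^ r) := by
  refine IsBigO.trans ?_ (isLittleO_exp_neg_mul_rpow_atTop ha r).isBigO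
  refine IsBigO.of_bound C ((eventually_ge_atTop 1).mono fun t ht => ?_)
  rw [Real.norm_of_nonneg (Real.exp_pos _).le]
  exact hθ t ht

theorem isBigO_rpow_nhdsGT_zero_of_inv {ε w : ℂ}
    (hinv : ∀ t : ℝ, 0 < t → θ (1 / t) = ε * (t : ℂ) ^ w * θ t)
    (htop : ∀ r : ℝ, θ =O[atTop] (· ^ r)) (r : ℝ) : θ =O[𝓝[>] 0] (· ^ r) := by
  have hpos : ∀ᶠ t in 𝓝[>] (0 : ℝ), 0 < t := self_mem_nhdsWithin
  have hθinv : (fun t => θ t⁻¹) =O[𝓝[>] 0] fun t => t⁻¹ ^ (-(r + w.re)) :=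
    (htop _).comp_tendsto tendsto_inv_nhdsGT_zero
  have hpow : (fun t : ℝ => ε * ((t⁻¹ : ℝ) : ℂ) ^ w) =O[𝓝[>] 0] fun t => t⁻¹ ^ w.re :=
    IsBigO.of_bound ‖ε‖ <| hpos.mono fun t ht => by
      rw [norm_mul, norm_cpow_eq_rpow_re_of_pos (inv_pos.2 ht),
        Real.norm_of_nonneg (Real.rpow_nonneg (inv_pos.2 ht).le _)]
  refine (hpow.mul hθinv).congr' (hpos.mono fun t ht => ?_) (hpos.mono fun t ht => ?_)
  · simpa using (hinv t⁻¹ (inv_pos.2 ht)).symm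
  · change t⁻¹ ^ w.re * t⁻¹ ^ (-(r + w.re)) = t ^ r
    rw [← Real.rpow_add (inv_pos.2 ht), show w.re + -(r + w.re) = -r by ring,
      Real.rpow_neg (inv_pos.2 ht).le, Real.inv_rpow ht.le, inv_inv]

theorem mellinConvergent_of_forall_isBigO_rpow_atTop_of_inv {ε w : ℂ}
    (hc : ContinuousOn θ (Ioi 0)) (hinv : ∀ t : ℝ, 0 < t → θ (1 / t) = ε * (t : ℂ) ^ w * θ t)
    (htop : ∀ r : ℝ, θ =O[atTop] (· ^ r)) (s : ℂ) : MellinConvergent θ s :=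
  mellinConvergent_of_isBigO_rpow (hc.locallyIntegrableOn measurableSet_Ioi)
    (htop (-(s.re + 1))) (lt_add_one _) (isBigO_rpow_nhdsGT_zero_of_inv hinv htop (-(s.re - 1)))
    (sub_one_lt _)

end Mellin

theorem iterMellin_functional_equation_general (r : ℕ)
    (θ : Fin r → ℝ → ℂ) (ε : Fin r → ℂ) (w : Fin r → ℤ) (s : Fin r → ℂ)
    (hc : ∀ i, ContinuousOn (θ i) (Set.Ioi 0))
    (hinv : ∀ i, ∀ t : ℝ, 0 < t → θ i (1 / t) = ε i * (t : ℂ) ^ ((w i : ℤ) : ℂ) * θ i t)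
    (hdecay : ∀ i, ∃ C a : ℝ, 0 < C ∧ 0 < a ∧
      ∀ t : ℝ, 1 ≤ t → ‖θ i t‖ ≤ C * Real.exp (-a * t)) :
    iterMellin ((List.ofFn fun i => (θ i, s i)).reverse) =
      (∏ i, ε i) *
        iterMellin (List.ofFn fun i => (θ i, ((w i : ℤ) : ℂ) - s i)) := by
  have htop i : ∀ r : ℝ, θ i =O[atTop] (· ^ r) :=
    let ⟨_, _, _, ha, hθ⟩ := hdecay i
    isBigO_rpow_atTop_of_exp_decay ha hθ
  have hconv i := mellinConvergent_of_forall_isBigO_rpow_atTop_of_inv (hc i) (hinv i) (htop i)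
  have hIoi : (Ioi (0 : ℝ))⁻¹ = Ioi 0 := by ext; simp
  have key := simplexIntegral_reverse_ofFn_eq_prod_mul
    (fun i => mellinIntegrand (θ i) (s i)) (fun i => mellinIntegrand (θ i) (w i - s i)) ε
    (fun i => stronglyMeasurable_mellinIntegrand (hc i) _)
    (fun i => (hconv i _).integrable_mellinIntegrand)
    (fun i _ => inv_sq_smul_mellinIntegrand_inv (hinv i) _) measurableSet_Ioi subset_rfl
  rw [hIoi] at key
  rw [iterMellin_eq_simplexIntegral, iterMellin_eq_simplexIntegral, List.map_reverse,
    List.map_ofFn, List.map_ofFn]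
  exact key

/-- Functional equation for iterated Mellin transforms:
`Λ(θ₁,…,θ_r; s₁,…,s_r) = ε₁⋯ε_r Λ(θ_r,…,θ₁; w_r - s_r, …, w₁ - s₁)`. -/
theorem iterMellin_functional_equation (r : ℕ)
    (θ : Fin r → ℝ → ℂ) (ε : Fin r → ℂ) (w : Fin r → ℤ) (s : Fin r → ℂ)
    (hc : ∀ i, ContinuousOn (θ i) (Set.Ioi 0))
    (hε : ∀ i, ε i = 1 ∨ ε i = -1)
    (hinv : ∀ i, ∀ t : ℝ, 0 < t → θ i (1 / t) = ε i * (t : ℂ) ^ ((w i : ℤ) : ℂ) * θ i t)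
    (hdecay : ∀ i, ∃ C a : ℝ, 0 < C ∧ 0 < a ∧
      ∀ t : ℝ, 1 ≤ t → ‖θ i t‖ ≤ C * Real.exp (-a * t)) :
    iterMellin ((List.ofFn fun i => (θ i, s i)).reverse) =
      (∏ i, ε i) *
        iterMellin (List.ofFn fun i => (θ i, ((w i : ℤ) : ℂ) - s i)) :=
  iterMellin_functional_equation_general r θ ε w s hc hinv hdecay
end

section
/- For Re(s₁), Re(s₂) > 1, the double Riemann ξ-function satisfies ξ(s₁,s₂) = D(s₁,s₂) + (1/s₁ − 1/s₂)·ξ(s₁+s₂), where D(s₁,s₂) = ∫_{0≤t₁≤t₂≤∞} θ⁰(t₁)t₁^{s₁−1} θ⁰(t₂)t₂^{s₂−1} dt₁dt₂ with θ⁰(t) = 2∑_{n≥1}e^{−πn²t²}, and ξ(s₁,s₂) is defined by the regularized iterated Mellin transform ∫_{0≤t₁≤t₂≤∞} θ(t₁)t₁^{s₁−1}θ⁰(t₂)t₂^{s₂−1}dt₁dt₂ − ∫_{0≤t₁≤t₂≤∞} t₁^{s₂−1}θ⁰(t₂)t₂^{s₁−1}dt₁dt₂ with θ = 1 + θ⁰.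 -/
open Complex Real MeasureTheory

/-- Jacobi theta function minus its constant term: `θ⁰(t) = 2∑_{n ≥ 1} e^{-π n² t²}`. -/
noncomputable def theta0 (t : ℝ) : ℝ := 2 * ∑' n : ℕ, Real.exp (-(π * ((n : ℝ) + 1) ^ 2 * t ^ 2))

/-- Full Jacobi theta function `θ = 1 + θ⁰`. -/
noncomputable def thetaFull (t : ℝ) : ℝ := 1 + theta0 t

/-- `D(s₁,s₂) = ∫_{0 ≤ t₁ ≤ t₂ ≤ ∞} θ⁰(t₁)t₁^{s₁-1} θ⁰(t₂)t₂^{s₂-1}`. -/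
noncomputable def Dfun (s₁ s₂ : ℂ) : ℂ :=
  ∫ t₂ in Set.Ioi (0 : ℝ),
    (∫ t₁ in Set.Ioc (0 : ℝ) t₂, (theta0 t₁ : ℂ) * (t₁ : ℂ) ^ (s₁ - 1)) *
      ((theta0 t₂ : ℂ) * (t₂ : ℂ) ^ (s₂ - 1))

/-- The double Riemann ξ-function, defined by the regularized iterated Mellin
transform. -/
noncomputable def doubleXi (s₁ s₂ : ℂ) : ℂ :=
  (∫ t₂ in Set.Ioi (0 : ℝ),
      (∫ t₁ in Set.Ioc (0 : ℝ) t₂, (thetaFull t₁ : ℂ) * (t₁ : ℂ) ^ (s₁ - 1)) *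
        ((theta0 t₂ : ℂ) * (t₂ : ℂ) ^ (s₂ - 1))) -
    (∫ t₂ in Set.Ioi (0 : ℝ),
      (∫ t₁ in Set.Ioc (0 : ℝ) t₂, (t₁ : ℂ) ^ (s₂ - 1)) *
        ((theta0 t₂ : ℂ) * (t₂ : ℂ) ^ (s₁ - 1)))

/-! ### Auxiliary lemmas -/

lemma theta0_eq {t : ℝ} (ht : 0 < t) :
    theta0 t = HurwitzZeta.evenKernel 0 (t ^ 2) - 1 := by
  have ht2 : 0 < t ^ 2 := by positivity
  have h := HurwitzZeta.hasSum_nat_cosKernel₀ 0 ht2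
  simp only [mul_zero, zero_mul, Real.cos_zero, mul_one, QuotientAddGroup.mk_zero] at h
  have h' : HasSum (fun n : ℕ ↦ 2 * rexp (-(π * ((n : ℝ) + 1) ^ 2 * t ^ 2)))
      (HurwitzZeta.cosKernel 0 (t ^ 2) - 1) := by
    refine h.congr_fun fun n ↦ ?_
    ring_nf
  rw [theta0, ← tsum_mul_left, h'.tsum_eq, HurwitzZeta.evenKernel_eq_cosKernel_of_zero]

lemma hasMellin_theta {s : ℂ} (hs : 1 < s.re) :
    HasMellin (fun t ↦ (((HurwitzZeta.evenKernel 0 t : ℝ)) : ℂ) - 1) (s / 2)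
      ((HurwitzZeta.hurwitzEvenFEPair 0).Λ (s / 2)) := by
  have h := (HurwitzZeta.hurwitzEvenFEPair 0).hasMellin
    (s := s / 2) (by rw [show (HurwitzZeta.hurwitzEvenFEPair 0).k = 1/2 from rfl, div_ofNat_re]
                     linarith)
  have hfe : (fun t ↦ (HurwitzZeta.hurwitzEvenFEPair 0).f t -
      (HurwitzZeta.hurwitzEvenFEPair 0).f₀) =
      (fun t ↦ (((HurwitzZeta.evenKernel 0 t : ℝ)) : ℂ) - 1) := by
    funext t
    simp [HurwitzZeta.hurwitzEvenFEPair]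
  rwa [hfe] at h

lemma theta0_integrand_eq {s : ℂ} {t : ℝ} (ht : t ∈ Set.Ioi (0:ℝ)) :
    (t : ℂ) ^ (s - 1) • ((((HurwitzZeta.evenKernel 0 (t ^ (2:ℝ)) : ℝ)) : ℂ) - 1)
      = (theta0 t : ℂ) * (t : ℂ) ^ (s - 1) := by
  have ht' : (0:ℝ) < t := ht
  rw [smul_eq_mul, mul_comm]
  congr 1
  rw [show (2:ℝ) = ((2:ℕ):ℝ) by norm_num, Real.rpow_natCast, theta0_eq ht']
  push_cast
  ring

lemma integrable_theta0_mellin {s : ℂ} (hs : 1 < s.re) :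
    IntegrableOn (fun t : ℝ ↦ (theta0 t : ℂ) * (t : ℂ) ^ (s - 1)) (Set.Ioi 0) := by
  have h := (hasMellin_theta hs).1
  have h2 : MellinConvergent
      (fun t : ℝ ↦ (((HurwitzZeta.evenKernel 0 (t ^ (2:ℝ)) : ℝ)) : ℂ) - 1) s := by
    have h2' := (MellinConvergent.comp_rpow
      (f := fun u : ℝ ↦ (((HurwitzZeta.evenKernel 0 u : ℝ)) : ℂ) - 1) (s := s)
      (a := (2:ℝ)) two_ne_zero).mpr (by rw [show ((2:ℝ):ℂ) = 2 by norm_num]; exact h)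
    exact h2'
  exact h2.congr_fun (fun t ht ↦ theta0_integrand_eq ht) measurableSet_Ioi

lemma integral_theta0_mellin {s : ℂ} (hs : 1 < s.re) :
    ∫ t in Set.Ioi (0:ℝ), (theta0 t : ℂ) * (t : ℂ) ^ (s - 1) = completedRiemannZeta s := by
  have hval := (hasMellin_theta hs).2
  have : (∫ t in Set.Ioi (0:ℝ), (theta0 t : ℂ) * (t : ℂ) ^ (s - 1)) =
      mellin (fun t : ℝ ↦ (((HurwitzZeta.evenKernel 0 (t ^ (2:ℝ)) : ℝ)) : ℂ) - 1) s := by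
    rw [mellin]
    exact (setIntegral_congr_fun measurableSet_Ioi
      (fun t ht ↦ (theta0_integrand_eq ht))).symm
  have h3 := mellin_comp_rpow
    (f := fun u : ℝ ↦ (((HurwitzZeta.evenKernel 0 u : ℝ)) : ℂ) - 1) s (2:ℝ)
  beta_reduce at h3
  rw [this, h3, show ((2:ℝ):ℂ) = 2 by norm_num, hval,
    show completedRiemannZeta s = (HurwitzZeta.hurwitzEvenFEPair 0).Λ (s / 2) / 2 from rfl]
  norm_num [smul_eq_mul]
  ring

lemma integral_Ioc_cpow' {s : ℂ} (hs : 0 < s.re) {x : ℝ} (hx : 0 < x) :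
    ∫ t in Set.Ioc (0:ℝ) x, (t:ℂ) ^ (s - 1) = (x:ℂ) ^ s / s := by
  have hs0 : s ≠ 0 := fun h ↦ by simp [h] at hs
  have h1 : (-1:ℝ) < (s - 1).re := by simp [Complex.sub_re]; linarith
  rw [← intervalIntegral.integral_of_le hx.le, integral_cpow (Or.inl h1),
    show s - 1 + 1 = s by ring, Complex.ofReal_zero, Complex.zero_cpow hs0, sub_zero]

lemma integrableOn_Ioc_cpow' {s : ℂ} (hs : 0 < s.re) {x : ℝ} (hx : 0 < x) :
    IntegrableOn (fun t : ℝ ↦ (t:ℂ) ^ (s - 1)) (Set.Ioc 0 x) := by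
  have h1 : (-1:ℝ) < (s - 1).re := by simp [Complex.sub_re]; linarith
  have := intervalIntegral.intervalIntegrable_cpow' (a := 0) (b := x) h1
  rwa [intervalIntegrable_iff_integrableOn_Ioc_of_le hx.le] at this

/-- For `Re s₁, Re s₂ > 1`:
`ξ(s₁,s₂) = D(s₁,s₂) + (1/s₁ - 1/s₂) ξ(s₁+s₂)`. -/
theorem doubleXi_eq_D_add (s₁ s₂ : ℂ) (h₁ : 1 < s₁.re) (h₂ : 1 < s₂.re) :
    doubleXi s₁ s₂ =
      Dfun s₁ s₂ + (1 / s₁ - 1 / s₂) * completedRiemannZeta (s₁ + s₂) := by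
  have h12 : 1 < (s₁ + s₂).re := by rw [Complex.add_re]; linarith
  have hs₁0 : s₁ ≠ 0 := fun h ↦ by rw [h] at h₁; simp at h₁; linarith
  have hs₂0 : s₂ ≠ 0 := fun h ↦ by rw [h] at h₂; simp at h₂; linarith
  have hint₁ := integrable_theta0_mellin h₁
  have hint₂ := integrable_theta0_mellin h₂
  have hint₁₂ := integrable_theta0_mellin h12
  set I₁ : ℝ → ℂ := fun x ↦ ∫ t in Set.Ioc (0:ℝ) x, (theta0 t : ℂ) * (t:ℂ) ^ (s₁ - 1) with hI₁
  -- continuity (hence measurability) of the primitive I₁ on (0, ∞)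
  have hcont : ∀ x : ℝ, 0 < x → ContinuousAt I₁ x := by
    intro x hx
    have hIcc : IntegrableOn (fun t : ℝ ↦ (theta0 t : ℂ) * (t:ℂ) ^ (s₁ - 1))
        (Set.Icc 0 (x+1)) := by
      rw [integrableOn_Icc_iff_integrableOn_Ioc]
      exact hint₁.mono_set Set.Ioc_subset_Ioi_self
    exact (intervalIntegral.continuousOn_primitive hIcc).continuousAt
      (Icc_mem_nhds (by linarith) (by linarith))
  have hmeasI₁ : AEStronglyMeasurable I₁ (volume.restrict (Set.Ioi (0:ℝ))) :=
    (ContinuousOn.aestronglyMeasurable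
      (fun x hx ↦ (hcont x hx).continuousWithinAt) measurableSet_Ioi)
  -- bound for I₁
  set C : ℝ := ∫ t in Set.Ioi (0:ℝ), ‖(theta0 t : ℂ) * (t:ℂ) ^ (s₁ - 1)‖ with hC
  have hI₁bdd : ∀ x : ℝ, ‖I₁ x‖ ≤ C := by
    intro x
    calc ‖I₁ x‖ ≤ ∫ t in Set.Ioc (0:ℝ) x, ‖(theta0 t : ℂ) * (t:ℂ) ^ (s₁ - 1)‖ :=
          norm_integral_le_integral_norm _
      _ ≤ C := setIntegral_mono_set hint₁.norm
          (ae_of_all _ fun t ↦ norm_nonneg _)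
          (HasSubset.Subset.eventuallyLE Set.Ioc_subset_Ioi_self)
  -- integrability of the D-integrand
  have hD_int : IntegrableOn
      (fun x ↦ I₁ x * ((theta0 x : ℂ) * (x:ℂ) ^ (s₂ - 1))) (Set.Ioi (0:ℝ)) := by
    refine Integrable.mono' ((hint₂.norm).const_mul C)
      (hmeasI₁.mul hint₂.aestronglyMeasurable) ?_
    filter_upwards [ae_restrict_mem measurableSet_Ioi] with x hx
    rw [norm_mul]
    exact mul_le_mul_of_nonneg_right (hI₁bdd x) (norm_nonneg _)
  -- integrability of the power part
  have hpow_int : IntegrableOn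
      (fun x : ℝ ↦ ((x:ℂ) ^ s₁ / s₁) * ((theta0 x : ℂ) * (x:ℂ) ^ (s₂ - 1))) (Set.Ioi (0:ℝ)) := by
    refine IntegrableOn.congr_fun (hint₁₂.const_mul (1/s₁)) (fun x hx ↦ ?_) measurableSet_Ioi
    have hx : (0:ℝ) < x := hx
    have hx0 : (x:ℂ) ≠ 0 := Complex.ofReal_ne_zero.mpr hx.ne'
    rw [show s₁ + s₂ - 1 = s₁ + (s₂ - 1) by ring, Complex.cpow_add _ _ hx0]
    ring
  -- second outer integral
  have hsecond : (∫ x in Set.Ioi (0:ℝ),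
        (∫ t in Set.Ioc (0:ℝ) x, (t:ℂ) ^ (s₂ - 1)) * ((theta0 x : ℂ) * (x:ℂ) ^ (s₁ - 1)))
      = (1/s₂) * completedRiemannZeta (s₁ + s₂) := by
    have heq : ∀ x ∈ Set.Ioi (0:ℝ),
        (∫ t in Set.Ioc (0:ℝ) x, (t:ℂ) ^ (s₂ - 1)) * ((theta0 x : ℂ) * (x:ℂ) ^ (s₁ - 1))
          = (1/s₂) * ((theta0 x : ℂ) * (x:ℂ) ^ (s₁ + s₂ - 1)) := by
      intro x hx
      have hx : (0:ℝ) < x := hx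
      have hx0 : (x:ℂ) ≠ 0 := Complex.ofReal_ne_zero.mpr hx.ne'
      rw [integral_Ioc_cpow' (by linarith) hx,
        show s₁ + s₂ - 1 = s₂ + (s₁ - 1) by ring, Complex.cpow_add _ _ hx0]
      ring
    rw [setIntegral_congr_fun measurableSet_Ioi heq, integral_const_mul _ _,
      integral_theta0_mellin h12]
  -- first outer integral
  have hfirst : (∫ x in Set.Ioi (0:ℝ),
        (∫ t in Set.Ioc (0:ℝ) x, (thetaFull t : ℂ) * (t:ℂ) ^ (s₁ - 1)) *
          ((theta0 x : ℂ) * (x:ℂ) ^ (s₂ - 1)))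
      = Dfun s₁ s₂ + (1/s₁) * completedRiemannZeta (s₁ + s₂) := by
    have hinner : ∀ x ∈ Set.Ioi (0:ℝ),
        (∫ t in Set.Ioc (0:ℝ) x, (thetaFull t : ℂ) * (t:ℂ) ^ (s₁ - 1)) *
            ((theta0 x : ℂ) * (x:ℂ) ^ (s₂ - 1))
          = I₁ x * ((theta0 x : ℂ) * (x:ℂ) ^ (s₂ - 1)) +
            ((x:ℂ) ^ s₁ / s₁) * ((theta0 x : ℂ) * (x:ℂ) ^ (s₂ - 1)) := by
      intro x hx
      have hx : (0:ℝ) < x := hx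
      have hsplit : (∫ t in Set.Ioc (0:ℝ) x, (thetaFull t : ℂ) * (t:ℂ) ^ (s₁ - 1))
          = I₁ x + (x:ℂ) ^ s₁ / s₁ := by
        have h1 : ∀ t : ℝ, (thetaFull t : ℂ) * (t:ℂ) ^ (s₁ - 1)
            = (theta0 t : ℂ) * (t:ℂ) ^ (s₁ - 1) + (t:ℂ) ^ (s₁ - 1) := by
          intro t
          rw [thetaFull]
          push_cast
          ring
        simp_rw [h1]
        rw [integral_add (hint₁.mono_set Set.Ioc_subset_Ioi_self)
          (integrableOn_Ioc_cpow' (by linarith) hx),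
          integral_Ioc_cpow' (by linarith) hx]
      rw [hsplit]
      ring
    rw [setIntegral_congr_fun measurableSet_Ioi hinner, integral_add hD_int hpow_int]
    congr 1
    have heq2 : ∀ x ∈ Set.Ioi (0:ℝ),
        ((x:ℂ) ^ s₁ / s₁) * ((theta0 x : ℂ) * (x:ℂ) ^ (s₂ - 1))
          = (1/s₁) * ((theta0 x : ℂ) * (x:ℂ) ^ (s₁ + s₂ - 1)) := by
      intro x hx
      have hx : (0:ℝ) < x := hx
      have hx0 : (x:ℂ) ≠ 0 := Complex.ofReal_ne_zero.mpr hx.ne'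
      rw [show s₁ + s₂ - 1 = s₁ + (s₂ - 1) by ring, Complex.cpow_add _ _ hx0]
      ring
    rw [setIntegral_congr_fun measurableSet_Ioi heq2, integral_const_mul _ _,
      integral_theta0_mellin h12]
  rw [doubleXi, hfirst, hsecond]
  ring
end

section
/- The double quadratic sum Q(1,1) := ∑_{m,n≥1} 1/((m²+n²)·n²) equals π⁴/72. -/
open Real

set_option maxHeartbeats 1000000

/-- The double quadratic sum `Q(1,1) = ∑_{m,n ≥ 1} 1/((m²+n²) n²)` equals `π⁴/72`. -/
theorem quadratic_sum_one_one :
    ∑' p : ℕ × ℕ,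
        1 / ((((p.1 + 1 : ℝ) ^ 2 + (p.2 + 1 : ℝ) ^ 2)) * ((p.2 + 1 : ℝ) ^ 2)) =
      π ^ 4 / 72 := by
  have h1 : HasSum (fun n : ℕ => 1 / ((n : ℝ) + 1) ^ 2) (π ^ 2 / 6) := by
    have h := hasSum_zeta_two
    rw [← hasSum_nat_add_iff' 1] at h
    simpa using h
  set f : ℕ × ℕ → ℝ := fun p =>
    1 / ((((p.1 + 1 : ℝ) ^ 2 + (p.2 + 1 : ℝ) ^ 2)) * ((p.2 + 1 : ℝ) ^ 2)) with hf_def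
  have hprod_sum : Summable (fun p : ℕ × ℕ =>
      (1 / ((p.1 : ℝ) + 1) ^ 2) * (1 / ((p.2 : ℝ) + 1) ^ 2)) := by
    apply summable_mul_of_summable_norm (f := fun n : ℕ => 1 / ((n : ℝ) + 1) ^ 2)
      (g := fun n : ℕ => 1 / ((n : ℝ) + 1) ^ 2) <;>
    · apply Summable.congr h1.summable
      intro n
      rw [Real.norm_eq_abs, abs_of_nonneg (by positivity)]
  have hpos : ∀ p : ℕ × ℕ, (0:ℝ) < ((p.1 + 1 : ℝ) ^ 2 + (p.2 + 1 : ℝ) ^ 2) := by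
    intro p; positivity
  have hfsum : Summable f := by
    have hnn : ∀ p : ℕ × ℕ, 0 ≤ f p := by intro p; rw [hf_def]; positivity
    have hle : ∀ p : ℕ × ℕ,
        f p ≤ (1 / ((p.1 : ℝ) + 1) ^ 2) * (1 / ((p.2 : ℝ) + 1) ^ 2) := by
      intro p
      rw [hf_def, div_mul_div_comm, one_mul]
      apply one_div_le_one_div_of_le (by positivity)
      nlinarith [sq_nonneg ((p.2 : ℝ) + 1), sq_nonneg ((p.1 : ℝ) + 1)]
    exact Summable.of_nonneg_of_le hnn hle hprod_sum
  have hS : HasSum f (∑' p, f p) := hfsum.hasSum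
  have hSswap : HasSum (fun p : ℕ × ℕ => f p.swap) (∑' p, f p) := by
    exact ((Equiv.prodComm ℕ ℕ).hasSum_iff).mpr hS
  have hadd := hS.add hSswap
  have hmul : HasSum (fun p : ℕ × ℕ =>
      (1 / ((p.1 : ℝ) + 1) ^ 2) * (1 / ((p.2 : ℝ) + 1) ^ 2)) (π ^ 2 / 6 * (π ^ 2 / 6)) :=
    h1.mul h1 hprod_sum
  have hkey : (fun p : ℕ × ℕ => f p + f p.swap) = fun p : ℕ × ℕ =>
      (1 / ((p.1 : ℝ) + 1) ^ 2) * (1 / ((p.2 : ℝ) + 1) ^ 2) := by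
    funext p
    rw [hf_def]
    simp only [Prod.fst_swap, Prod.snd_swap]
    have h2 : ((p.1 : ℝ) + 1) ^ 2 > 0 := by positivity
    have h3 : ((p.2 : ℝ) + 1) ^ 2 > 0 := by positivity
    field_simp
    ring
  rw [hkey] at hadd
  have := hmul.unique hadd
  have hπ : π ^ 2 / 6 * (π ^ 2 / 6) = π ^ 4 / 36 := by ring
  rw [hπ] at this
  show (∑' p, f p) = π ^ 4 / 72
  linarith
end

section
/- The completed Eisenstein L-function Λ(G_{2k};s) = (2π)^{−s}Γ(s)ζ(s)ζ(s−2k+1) satisfies the functional equation Λ(G_{2k}; s) = (−1)^k Λ(G_{2k}; 2k−s) as meromorphic functions on ℂ, for every integer k ≥ 2. -/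
open Complex Real

/-- Functional equation of the completed Eisenstein L-function:
`Λ(G_{2k};s) = (-1)^k Λ(G_{2k};2k-s)` with
`Λ(G_{2k};s) = (2π)^{-s} Γ(s) ζ(s) ζ(s-2k+1)`, as an identity of meromorphic
functions on `ℂ` (stated at every point away from the integers, a set
determining the identity). -/
theorem completed_eisenstein_L_functional_equation (k : ℕ) (hk : 2 ≤ k) (s : ℂ)
    (hs : ∀ n : ℤ, s ≠ (n : ℂ)) :
    (2 * (π : ℂ)) ^ (-s) * Complex.Gamma s * riemannZeta s *
        riemannZeta (s - 2 * k + 1) =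
      (-1) ^ k *
        ((2 * (π : ℂ)) ^ (-(2 * (k : ℂ) - s)) * Complex.Gamma (2 * k - s) *
          riemannZeta (2 * k - s) * riemannZeta ((2 * k - s) - 2 * k + 1)) := by
  have h1 : s - 2 * (k : ℂ) + 1 = 1 - (2 * k - s) := by ring
  have h2 : (2 * (k : ℂ) - s) - 2 * k + 1 = 1 - s := by ring
  have ha : ∀ n : ℕ, (2 * (k : ℂ) - s) ≠ -n := fun n h =>
    hs (2 * k + n) (by push_cast; linear_combination -h)
  have ha' : (2 * (k : ℂ) - s) ≠ 1 := fun h =>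
    hs (2 * k - 1) (by push_cast; linear_combination -h)
  have hb : ∀ n : ℕ, s ≠ -n := fun n h => hs (-n) (by push_cast; exact h)
  have hb' : s ≠ 1 := fun h => hs 1 (by push_cast; exact h)
  rw [h1, h2, riemannZeta_one_sub ha ha', riemannZeta_one_sub hb hb']
  have hcos : Complex.cos ((k : ℂ) * π) = (-1) ^ k := by
    rw [show ((k : ℂ) * π) = (((k * π : ℝ)) : ℂ) by push_cast; ring, ← Complex.ofReal_cos,
      show Real.cos (k * π) = (-1) ^ k by simpa using Real.cos_nat_mul_pi_sub 0 k]
    push_cast; ring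
  have hc : Complex.cos (π * (2 * k - s) / 2) = (-1) ^ k * Complex.cos (π * s / 2) := by
    have he : (π : ℂ) * (2 * k - s) / 2 = -(π * s / 2) + (k : ℂ) * π := by push_cast; ring
    rw [he, Complex.cos_add, Complex.sin_nat_mul_pi, hcos, Complex.cos_neg]
    ring
  rw [hc]
  ring
end

section
/- For even w ≥ 2 and s ∈ ℂ, the (w+1)×(w+1) tridiagonal matrix M_w with all diagonal entries 2s−w, superdiagonal entries 1,2,...,w and subdiagonal entries w,w−1,...,1, has determinant det(M_w) = 2^{w+1}·s·(s−1)·(s−2)···(s−w). -/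
open Complex Matrix Finset

section DetMwAux
open Polynomial

noncomputable def pX (w k : ℕ) : ℂ[X] := (1 + X) ^ (w - k) * (1 - X) ^ k

lemma aux1 (a : ℕ) : (1 + X : ℂ[X]) * derivative ((1 + X) ^ a) = C (a : ℂ) * (1 + X) ^ a := by
  cases a with
  | zero => simp
  | succ n =>
    rw [derivative_pow]
    simp only [derivative_add, derivative_one, derivative_X, zero_add, mul_one,
      Nat.add_sub_cancel]
    ring

lemma aux2 (b : ℕ) : (1 - X : ℂ[X]) * derivative ((1 - X) ^ b) = -(C (b : ℂ) * (1 - X) ^ b) := by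
  cases b with
  | zero => simp
  | succ n =>
    rw [derivative_pow]
    simp only [derivative_sub, derivative_one, derivative_X, zero_sub,
      Nat.add_sub_cancel]
    ring

lemma keyA (w k : ℕ) (hk : k ≤ w) :
    derivative (pX w k) + C (w : ℂ) * (X * pX w k) =
      C ((w : ℂ) - 2 * k) * pX w k + X ^ 2 * derivative (pX w k) := by
  have h1 := aux1 (w - k)
  have h2 := aux2 k
  have hcast : ((w - k : ℕ) : ℂ) = (w : ℂ) - k := by push_cast [hk]; ring
  have hd : (1 - X ^ 2 : ℂ[X]) * derivative (pX w k) =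
      (C ((w : ℂ) - 2 * k) - C (w : ℂ) * X) * pX w k := by
    rw [pX, derivative_mul]
    calc (1 - X ^ 2 : ℂ[X]) * (derivative ((1 + X) ^ (w - k)) * (1 - X) ^ k
          + (1 + X) ^ (w - k) * derivative ((1 - X) ^ k))
        = ((1 + X) * derivative ((1 + X) ^ (w - k))) * ((1 - X) * (1 - X) ^ k)
          + ((1 + X) * (1 + X) ^ (w - k)) * ((1 - X) * derivative ((1 - X) ^ k)) := by ring
      _ = (C ((w - k : ℕ) : ℂ) * (1 + X) ^ (w - k)) * ((1 - X) * (1 - X) ^ k)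
          + ((1 + X) * (1 + X) ^ (w - k)) * (-(C (k : ℂ) * (1 - X) ^ k)) := by rw [h1, h2]
      _ = (C ((w - k : ℕ) : ℂ) * (1 - X) - C (k : ℂ) * (1 + X)) * ((1 + X) ^ (w - k) * (1 - X) ^ k) := by ring
      _ = (C ((w : ℂ) - 2 * k) - C (w : ℂ) * X) * ((1 + X) ^ (w - k) * (1 - X) ^ k) := by
          rw [hcast]
          simp only [C_sub, C_mul, map_ofNat]
          ring
  linear_combination hd

lemma keyB (w k : ℕ) (hk : k ≤ w) (j : ℕ) :
    ((j : ℂ) + 1) * (pX w k).coeff (j + 1)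
      + (if 1 ≤ j then ((w : ℂ) - ((j - 1 : ℕ) : ℂ)) * (pX w k).coeff (j - 1) else 0)
      = ((w : ℂ) - 2 * k) * (pX w k).coeff j := by
  have hA := keyA w k hk
  rw [show (X : ℂ[X]) * pX w k = pX w k * X ^ 1 by ring,
      show (X : ℂ[X]) ^ 2 * derivative (pX w k) = derivative (pX w k) * X ^ 2 by ring] at hA
  have h := congrArg (fun q => Polynomial.coeff q j) hA
  simp only [coeff_add, coeff_C_mul, coeff_derivative, coeff_mul_X_pow'] at h
  rcases j with _ | m
  · simp only [if_neg (by omega : ¬ (1 : ℕ) ≤ 0), zero_add] at h ⊢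
    push_cast at h ⊢
    linear_combination h
  · rcases m with _ | n
    · norm_num at h ⊢
      linear_combination h
    · simp only [if_pos (by omega : 1 ≤ n + 1 + 1), if_pos (by omega : 1 ≤ n + 1 + 1 - 0),
        if_pos (by omega : 2 ≤ n + 1 + 1), coeff_derivative,
        show n + 1 + 1 - 1 = n + 1 from rfl, show n + 1 + 1 - 2 = n from by omega] at h ⊢
      push_cast at h ⊢
      linear_combination h

lemma pX_natDegree_le (w k : ℕ) (hk : k ≤ w) : (pX w k).natDegree ≤ w := by
  have h1 : ((1 + X : ℂ[X])).natDegree ≤ 1 := by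
    simpa using natDegree_add_le (1 : ℂ[X]) X
  have h2 : ((1 - X : ℂ[X])).natDegree ≤ 1 := by
    simpa using natDegree_sub_le (1 : ℂ[X]) X
  refine natDegree_mul_le.trans ?_
  have := (natDegree_pow_le (p := (1 + X : ℂ[X])) (n := w - k)).trans
    (Nat.mul_le_mul_left _ h1)
  have := (natDegree_pow_le (p := (1 - X : ℂ[X])) (n := k)).trans
    (Nat.mul_le_mul_left _ h2)
  omega

lemma pX_coeff_eq_zero (w k : ℕ) (hk : k ≤ w) {m : ℕ} (hm : w < m) : (pX w k).coeff m = 0 :=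
  coeff_eq_zero_of_natDegree_lt (lt_of_le_of_lt (pX_natDegree_le w k hk) hm)

noncomputable def qX (w k : ℕ) : ℂ[X] := (2 - X) ^ (w - k) * X ^ k

lemma qX_natDegree_le (w k : ℕ) (hk : k ≤ w) : (qX w k).natDegree ≤ w := by
  have h1 : ((2 - X : ℂ[X])).natDegree ≤ 1 := by
    simpa using natDegree_sub_le (2 : ℂ[X]) X
  refine natDegree_mul_le.trans ?_
  have := (natDegree_pow_le (p := (2 - X : ℂ[X])) (n := w - k)).trans
    (Nat.mul_le_mul_left _ h1)
  have h3 : ((X : ℂ[X]) ^ k).natDegree ≤ k := natDegree_X_pow_le k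
  omega

lemma pX_eq_comp (w k : ℕ) : pX w k = (qX w k).comp (1 - X) := by
  rw [pX, qX, mul_comp, pow_comp, pow_comp, sub_comp, X_comp, ofNat_comp]
  norm_num
  rw [show ((2 : ℂ[X]) - (1 - X)) = 1 + X by ring]
  exact Or.inl rfl

lemma comp_coeff (q r : ℂ[X]) (N : ℕ) (h : q.natDegree < N) (j : ℕ) :
    (q.comp r).coeff j = ∑ m ∈ Finset.range N, q.coeff m * (r ^ m).coeff j := by
  rw [comp_eq_sum_left, Polynomial.sum_over_range' q (by simp) N h,
    finset_sum_coeff]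
  simp [coeff_C_mul]

lemma coeff_one_sub_X_pow (m : ℕ) : ((1 - X : ℂ[X]) ^ m).coeff m = (-1 : ℂ) ^ m := by
  have h : ((1 : ℂ[X]) - X) = -(X - C 1) := by rw [C_1]; ring
  rw [h, neg_pow, show ((-1 : ℂ[X]) ^ m) = C ((-1 : ℂ) ^ m) by simp, coeff_C_mul]
  have hd : ((X - C (1 : ℂ)) ^ m).natDegree = m := by
    rw [natDegree_pow, natDegree_X_sub_C, mul_one]
  have hm : ((X - C (1 : ℂ)) ^ m).coeff m = 1 := by
    have h0 := ((monic_X_sub_C (1 : ℂ)).pow m).coeff_natDegree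
    rwa [hd] at h0
  rw [hm, mul_one]

lemma qX_coeff_lt (w k m : ℕ) (hm : m < k) : (qX w k).coeff m = 0 := by
  rw [qX, coeff_mul_X_pow', if_neg (by omega)]

lemma qX_coeff_diag (w k : ℕ) : (qX w k).coeff k = 2 ^ (w - k) := by
  rw [qX, coeff_mul_X_pow', if_pos le_rfl]
  simp [coeff_zero_eq_eval_zero, eval_pow]

lemma detV_ne_zero (w : ℕ) :
    (Matrix.of fun j k : Fin (w + 1) => (pX w (k : ℕ)).coeff (j : ℕ)).det ≠ 0 := by
  set T : Matrix (Fin (w + 1)) (Fin (w + 1)) ℂ :=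
    Matrix.of fun j m : Fin (w + 1) => ((1 - X : ℂ[X]) ^ (m : ℕ)).coeff (j : ℕ) with hT
  set Q : Matrix (Fin (w + 1)) (Fin (w + 1)) ℂ :=
    Matrix.of fun m k : Fin (w + 1) => (qX w (k : ℕ)).coeff (m : ℕ) with hQ
  have hVTQ : (Matrix.of fun j k : Fin (w + 1) => (pX w (k : ℕ)).coeff (j : ℕ)) = T * Q := by
    ext j k
    rw [Matrix.mul_apply, Matrix.of_apply, pX_eq_comp,
      comp_coeff (qX w (k : ℕ)) (1 - X) (w + 1)
        (Nat.lt_succ_of_le (qX_natDegree_le w (k : ℕ) (Fin.is_le k))) (j : ℕ),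
      ← Fin.sum_univ_eq_sum_range (fun m => (qX w (k : ℕ)).coeff m * ((1 - X : ℂ[X]) ^ m).coeff (j : ℕ))]
    exact Finset.sum_congr rfl fun m _ => (mul_comm _ _)
  have hTtri : T.BlockTriangular id := by
    intro a b hab
    have h1 : ((1 : ℂ[X]) - X).natDegree ≤ 1 := by
      simpa using natDegree_sub_le (1 : ℂ[X]) X
    have h2 : (((1 : ℂ[X]) - X) ^ (b : ℕ)).natDegree ≤ (b : ℕ) * 1 :=
      natDegree_pow_le.trans (Nat.mul_le_mul_left _ h1)
    have hba : (b : ℕ) < (a : ℕ) := hab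
    rw [mul_one] at h2
    exact coeff_eq_zero_of_natDegree_lt (lt_of_le_of_lt h2 hba)
  have hQtri : Q.BlockTriangular OrderDual.toDual := by
    intro a b hab
    exact qX_coeff_lt w _ _ hab
  have hdT : T.det = ∏ m : Fin (w + 1), (-1 : ℂ) ^ (m : ℕ) := by
    rw [Matrix.det_of_upperTriangular hTtri]
    exact Finset.prod_congr rfl fun m _ => coeff_one_sub_X_pow (m : ℕ)
  have hdQ : Q.det = ∏ m : Fin (w + 1), (2 : ℂ) ^ (w - (m : ℕ)) := by
    rw [Matrix.det_of_lowerTriangular Q hQtri]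
    exact Finset.prod_congr rfl fun m _ => qX_coeff_diag w (m : ℕ)
  rw [hVTQ, Matrix.det_mul, hdT, hdQ]
  apply mul_ne_zero
  · exact Finset.prod_ne_zero_iff.2 fun m _ => pow_ne_zero _ (by norm_num)
  · exact Finset.prod_ne_zero_iff.2 fun m _ => pow_ne_zero _ (by norm_num)

theorem det_M_w' (w : ℕ) (s : ℂ) :
    (Matrix.of fun i j : Fin (w + 1) =>
        if (i : ℕ) = (j : ℕ) then 2 * s - (w : ℂ)
        else if (j : ℕ) = (i : ℕ) + 1 then ((i : ℕ) + 1 : ℂ)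
        else if (i : ℕ) = (j : ℕ) + 1 then ((w : ℂ) - (j : ℕ))
        else 0).det =
      (2 : ℂ) ^ (w + 1) * ∏ j ∈ Finset.range (w + 1), (s - (j : ℂ)) := by
  set V : Matrix (Fin (w + 1)) (Fin (w + 1)) ℂ :=
    Matrix.of fun j k : Fin (w + 1) => (pX w (k : ℕ)).coeff (j : ℕ) with hVdef
  have hV : V.det ≠ 0 := detV_ne_zero w
  have key : (Matrix.of fun i j : Fin (w + 1) =>
        if (i : ℕ) = (j : ℕ) then 2 * s - (w : ℂ)
        else if (j : ℕ) = (i : ℕ) + 1 then ((i : ℕ) + 1 : ℂ)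
        else if (i : ℕ) = (j : ℕ) + 1 then ((w : ℂ) - (j : ℕ))
        else 0) * V
      = V * Matrix.diagonal (fun k : Fin (w + 1) => 2 * (s - ((k : ℕ) : ℂ))) := by
    ext i k
    rw [Matrix.mul_apply, Matrix.mul_diagonal]
    have hk : (k : ℕ) ≤ w := Fin.is_le k
    have hsplit : ∀ j : Fin (w + 1),
        (Matrix.of fun i j : Fin (w + 1) =>
          if (i : ℕ) = (j : ℕ) then 2 * s - (w : ℂ)
          else if (j : ℕ) = (i : ℕ) + 1 then ((i : ℕ) + 1 : ℂ)
          else if (i : ℕ) = (j : ℕ) + 1 then ((w : ℂ) - (j : ℕ))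
          else 0) i j * V j k
        = (if (i : ℕ) = (j : ℕ) then 2 * s - (w : ℂ) else 0) * V j k
          + (if (j : ℕ) = (i : ℕ) + 1 then ((i : ℕ) + 1 : ℂ) else 0) * V j k
          + (if (i : ℕ) = (j : ℕ) + 1 then ((w : ℂ) - (j : ℕ)) else 0) * V j k := by
      intro j
      rw [Matrix.of_apply]
      by_cases h1 : (i : ℕ) = (j : ℕ)
      · rw [if_pos h1, if_pos h1, if_neg (by omega), if_neg (by omega)]; ring
      · rw [if_neg h1, if_neg h1]
        by_cases h2 : (j : ℕ) = (i : ℕ) + 1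
        · rw [if_pos h2, if_pos h2, if_neg (by omega)]; ring
        · rw [if_neg h2, if_neg h2]
          by_cases h3 : (i : ℕ) = (j : ℕ) + 1
          · simp only [if_pos h3]; ring
          · simp only [if_neg h3]; ring
    rw [Finset.sum_congr rfl (fun j _ => hsplit j), Finset.sum_add_distrib,
      Finset.sum_add_distrib]
    have hS1 : (∑ j : Fin (w + 1),
        (if (i : ℕ) = (j : ℕ) then 2 * s - (w : ℂ) else 0) * V j k)
        = (2 * s - (w : ℂ)) * (pX w (k : ℕ)).coeff (i : ℕ) := by
      rw [Finset.sum_eq_single i]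
      · rw [if_pos rfl]; rfl
      · intro b _ hb
        rw [if_neg (fun h => hb (Fin.ext h).symm), zero_mul]
      · exact fun h => absurd (Finset.mem_univ i) h
    have hS2 : (∑ j : Fin (w + 1),
        (if (j : ℕ) = (i : ℕ) + 1 then ((i : ℕ) + 1 : ℂ) else 0) * V j k)
        = ((i : ℕ) + 1 : ℂ) * (pX w (k : ℕ)).coeff ((i : ℕ) + 1) := by
      by_cases hi : (i : ℕ) < w
      · rw [Finset.sum_eq_single (⟨(i : ℕ) + 1, by omega⟩ : Fin (w + 1))]
        · rw [if_pos rfl]; rfl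
        · intro b _ hb
          rw [if_neg (fun h => hb (Fin.ext h)), zero_mul]
        · exact fun h => absurd (Finset.mem_univ _) h
      · rw [pX_coeff_eq_zero w (k : ℕ) hk (by omega), mul_zero]
        apply Finset.sum_eq_zero
        intro b _
        rw [if_neg (by have := b.isLt; omega), zero_mul]
    have hS3 : (∑ j : Fin (w + 1),
        (if (i : ℕ) = (j : ℕ) + 1 then ((w : ℂ) - (j : ℕ)) else 0) * V j k)
        = (if 1 ≤ (i : ℕ) then ((w : ℂ) - (((i : ℕ) - 1 : ℕ) : ℂ)) *
            (pX w (k : ℕ)).coeff ((i : ℕ) - 1) else 0) := by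
      by_cases hi : 1 ≤ (i : ℕ)
      · rw [if_pos hi, Finset.sum_eq_single (⟨(i : ℕ) - 1, by omega⟩ : Fin (w + 1))]
        · simp only [Fin.val_mk]
          rw [if_pos (by omega)]; rfl
        · intro b _ hb
          rw [if_neg, zero_mul]
          intro h
          exact hb (Fin.ext (by simp only [Fin.val_mk]; omega))
        · exact fun h => absurd (Finset.mem_univ _) h
      · rw [if_neg hi]
        apply Finset.sum_eq_zero
        intro b _
        rw [if_neg (by omega), zero_mul]
    rw [hS1, hS2, hS3]
    have hB := keyB w (k : ℕ) hk (i : ℕ)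
    have hVik : V i k = (pX w (k : ℕ)).coeff (i : ℕ) := rfl
    rw [hVik]
    linear_combination hB
  have hdet2 : (Matrix.of fun i j : Fin (w + 1) =>
        if (i : ℕ) = (j : ℕ) then 2 * s - (w : ℂ)
        else if (j : ℕ) = (i : ℕ) + 1 then ((i : ℕ) + 1 : ℂ)
        else if (i : ℕ) = (j : ℕ) + 1 then ((w : ℂ) - (j : ℕ))
        else 0).det * V.det
      = V.det * ∏ k : Fin (w + 1), (2 * (s - ((k : ℕ) : ℂ))) := by
    rw [← Matrix.det_mul, key, Matrix.det_mul, Matrix.det_diagonal]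
  have hprod : (∏ k : Fin (w + 1), (2 * (s - ((k : ℕ) : ℂ))))
      = (2 : ℂ) ^ (w + 1) * ∏ j ∈ Finset.range (w + 1), (s - (j : ℂ)) := by
    rw [Finset.prod_mul_distrib, Finset.prod_const, Finset.card_univ, Fintype.card_fin,
      Fin.prod_univ_eq_prod_range (fun j => s - (j : ℂ))]
  rw [hprod, mul_comm V.det] at hdet2
  exact mul_right_cancel₀ hV hdet2

end DetMwAux

/-- Determinant of the tridiagonal matrix `M_w` (size `w+1`, `w` even, `w ≥ 2`):
diagonal entries `2s - w`, superdiagonal `1, 2, …, w`, subdiagonal `w, w-1, …, 1`: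
`det M_w = 2^{w+1} s (s-1)(s-2)⋯(s-w)`. -/
theorem det_M_w (w : ℕ) (hw : Even w) (hw2 : 2 ≤ w) (s : ℂ) :
    (Matrix.of fun i j : Fin (w + 1) =>
        if (i : ℕ) = (j : ℕ) then 2 * s - (w : ℂ)
        else if (j : ℕ) = (i : ℕ) + 1 then ((i : ℕ) + 1 : ℂ)
        else if (i : ℕ) = (j : ℕ) + 1 then ((w : ℂ) - (j : ℕ))
        else 0).det =
      (2 : ℂ) ^ (w + 1) * ∏ j ∈ Finset.range (w + 1), (s - (j : ℂ)) :=
  det_M_w' w s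
end

section
/- Let f₁, f₂ be modular forms of weight 2k₁, 2k₂ with Fourier expansions f₁ = ∑_{m≥1}a_m q^m, f₂ = ∑_{n≥1}b_n q^n (vanishing constant terms), with coefficients of polynomial growth. Then for Re(s₁), Re(s₂) sufficiently large, the double Mellin transform Λ(θ_{f₁},θ_{f₂};s₁,s₂) := ∫_{0≤t₁≤t₂≤∞} f₁(it₁)f₂(it₂)t₁^{s₁−1}t₂^{s₂−1}dt₁dt₂ equals (2π)^{−s₁−s₂}Γ(s₁+s₂)·∑_{m,n≥1} a_m b_n ∫₀¹ x^{s₁−1}(mx+n)^{−(s₁+s₂)}dx. -/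
/-!
Expanding `f₁` and `f₂` in their `q`-series turns the double Mellin transform into a double
series of integrals `∫₀^∞ (∫₀^{t₂} e^{-2πm t₁} t₁^{s₁-1} dt₁) e^{-2πn t₂} t₂^{s₂-1} dt₂`.
The inner integrals are bounded uniformly in `t₂` by `(2πm)^{-Re s₁} Γ(Re s₁)`, so polynomial
growth of the coefficients makes everything absolutely convergent once `Re s₁, Re s₂` exceed
the growth exponents by one, and sums and integrals may be interchanged. In each term the
substitution `t₁ = x t₂` and Fubini give `∫₀¹ x^{s₁-1} ∫₀^∞ t^{s₁+s₂-1} e^{-2π(mx+n)t} dt dx`,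
whose inner integral is `(2π(mx+n))^{-(s₁+s₂)} Γ(s₁+s₂)`.
-/

open Complex Real MeasureTheory Set Filter

lemma integral_norm_mul_le_of_norm_le {α 𝕜 : Type*} [MeasurableSpace α] [NormedRing 𝕜]
    {μ : Measure α} {f g : α → 𝕜} {c : ℝ} (hg : Integrable g μ) (hf : ∀ x, ‖f x‖ ≤ c) :
    ∫ x, ‖f x * g x‖ ∂μ ≤ c * ∫ x, ‖g x‖ ∂μ := by
  rw [← integral_const_mul]
  refine integral_mono_of_nonneg (Eventually.of_forall fun _ => norm_nonneg _)
    (hg.norm.const_mul c) (Eventually.of_forall fun x => ?_)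
  exact (norm_mul_le _ _).trans (mul_le_mul_of_nonneg_right (hf x) (norm_nonneg _))

section GammaKernel

lemma norm_cpow_mul_cexp_neg_mul {t : ℝ} (ht : 0 < t) (s : ℂ) (μ : ℝ) :
    ‖(t : ℂ) ^ (s - 1) * cexp (-(μ * t))‖ = t ^ (s.re - 1) * rexp (-(μ * t)) := by
  rw [norm_mul, norm_cpow_eq_rpow_re_of_pos ht, ← ofReal_mul, ← ofReal_neg, norm_exp_ofReal,
    sub_re, one_re]

variable {s : ℂ} {μ : ℝ}

lemma integrableOn_cpow_mul_cexp_neg_mul_Ioi (hs : 0 < s.re) (hμ : 0 < μ) :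
    IntegrableOn (fun t : ℝ => (t : ℂ) ^ (s - 1) * cexp (-(μ * t))) (Ioi 0) := by
  have hnorm : IntegrableOn (fun t : ℝ => t ^ (s.re - 1) * rexp (-μ * t ^ (1 : ℝ))) (Ioi 0) :=
    integrableOn_rpow_mul_exp_neg_mul_rpow (by linarith) one_pos hμ
  refine hnorm.mono' (by fun_prop) ?_
  filter_upwards [ae_restrict_mem measurableSet_Ioi] with t ht
  rw [norm_cpow_mul_cexp_neg_mul ht, rpow_one, neg_mul]

lemma integral_norm_cpow_mul_cexp_neg_mul_Ioi (hs : 0 < s.re) (hμ : 0 < μ) :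
    ∫ t in Ioi (0 : ℝ), ‖(t : ℂ) ^ (s - 1) * cexp (-(μ * t))‖ = μ ^ (-s.re) * Real.Gamma s.re := by
  rw [setIntegral_congr_fun measurableSet_Ioi fun t ht => norm_cpow_mul_cexp_neg_mul ht s μ,
    Real.integral_rpow_mul_exp_neg_mul_Ioi hs hμ, one_div, inv_rpow hμ.le, rpow_neg hμ.le]

lemma setIntegral_norm_cpow_mul_cexp_neg_mul_le (hs : 0 < s.re) (hμ : 0 < μ) {S : Set ℝ}
    (hS : S ⊆ Ioi 0) :
    ∫ t in S, ‖(t : ℂ) ^ (s - 1) * cexp (-(μ * t))‖ ≤ μ ^ (-s.re) * Real.Gamma s.re := by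
  rw [← integral_norm_cpow_mul_cexp_neg_mul_Ioi hs hμ]
  exact setIntegral_mono_set (integrableOn_cpow_mul_cexp_neg_mul_Ioi hs hμ).norm
    (Eventually.of_forall fun _ => norm_nonneg _) hS.eventuallyLE

lemma integral_cpow_mul_cexp_neg_mul_Ioi_eq_cpow_neg (hs : 0 < s.re) (hμ : 0 < μ) :
    ∫ t in Ioi (0 : ℝ), (t : ℂ) ^ (s - 1) * cexp (-(μ * t)) = (μ : ℂ) ^ (-s) * Gamma s := by
  rw [integral_cpow_mul_exp_neg_mul_Ioi hs hμ, one_div,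
    inv_cpow _ _ (by rw [arg_ofReal_of_nonneg hμ.le]; exact pi_pos.ne), cpow_neg]

/-- `μ ^ (-s) * γ(s, μ * T)`, where `γ` is the lower incomplete Gamma function. -/
noncomputable def lowerGammaIntegral (μ : ℝ) (s : ℂ) (T : ℝ) : ℂ :=
  ∫ t in Ioc 0 T, (t : ℂ) ^ (s - 1) * cexp (-(μ * t))

lemma norm_lowerGammaIntegral_le (hs : 0 < s.re) (hμ : 0 < μ) (T : ℝ) :
    ‖lowerGammaIntegral μ s T‖ ≤ μ ^ (-s.re) * Real.Gamma s.re :=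
  (norm_integral_le_integral_norm _).trans
    (setIntegral_norm_cpow_mul_cexp_neg_mul_le hs hμ fun _ ht => ht.1)

lemma continuous_lowerGammaIntegral (hs : 0 < s.re) (μ : ℝ) :
    Continuous (lowerGammaIntegral μ s) := by
  have hprim := intervalIntegral.continuous_primitive (a := 0) fun a b =>
    (intervalIntegral.intervalIntegrable_cpow' (r := s - 1) (by rw [sub_re, one_re]; linarith))
      |>.mul_continuousOn
      (by fun_prop : Continuous fun t : ℝ => cexp (-(μ * t))).continuousOn
  refine (hprim.comp (continuous_id.max (continuous_const (y := (0 : ℝ))))).congr fun T => ?_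
  rw [Function.comp_apply, id, intervalIntegral.integral_of_le (le_max_right T 0),
    lowerGammaIntegral]
  rcases le_total T 0 with hT | hT
  · rw [max_eq_right hT, Ioc_self, Ioc_eq_empty (not_lt.mpr hT)]
  · rw [max_eq_left hT]

lemma lowerGammaIntegral_eq_cpow_mul {T : ℝ} (hT : 0 < T) :
    lowerGammaIntegral μ s T =
      (T : ℂ) ^ s * ∫ x in Ioc (0 : ℝ) 1, (x : ℂ) ^ (s - 1) * cexp (-(μ * (x * T))) := by
  have hsubst := intervalIntegral.integral_comp_mul_right (a := 0) (b := 1)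
    (fun t : ℝ => (t : ℂ) ^ (s - 1) * cexp (-(μ * t))) hT.ne'
  rw [zero_mul, one_mul, eq_inv_smul_iff₀ hT.ne'] at hsubst
  have hscale : ∀ x ∈ Ioc (0 : ℝ) 1, ((x * T : ℝ) : ℂ) ^ (s - 1) * cexp (-(μ * (x * T : ℝ)))
      = (T : ℂ) ^ (s - 1) * ((x : ℂ) ^ (s - 1) * cexp (-(μ * (x * T)))) := fun x hx => by
    rw [ofReal_mul, mul_cpow_ofReal_nonneg hx.1.le hT.le]
    ring
  rw [lowerGammaIntegral, ← intervalIntegral.integral_of_le hT.le, ← hsubst,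
    intervalIntegral.integral_of_le zero_le_one, setIntegral_congr_fun measurableSet_Ioc hscale,
    integral_const_mul, real_smul, ← mul_assoc]
  congr 1
  conv_rhs => rw [← add_sub_cancel 1 s, cpow_add _ _ (ofReal_ne_zero.mpr hT.ne'), cpow_one]

end GammaKernel

section PerTerm

variable {M N : ℝ} {s₁ s : ℂ}

lemma integrable_cpow_mul_cpow_mul_cexp_prod (hM : 0 ≤ M) (hN : 0 < N) (h₁ : 0 < s₁.re)
    (hs : 0 < s.re) :
    Integrable (Function.uncurry fun t x : ℝ =>
        (x : ℂ) ^ (s₁ - 1) * ((t : ℂ) ^ (s - 1) * cexp (-((M * x + N : ℝ) * t))))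
      ((volume.restrict (Ioi 0)).prod (volume.restrict (Ioc 0 1))) := by
  have hint_x : IntegrableOn (fun x : ℝ => x ^ (s₁.re - 1)) (Ioc 0 1) :=
    (intervalIntegral.intervalIntegrable_rpow' (by linarith)).1
  have hint_t := (integrableOn_cpow_mul_cexp_neg_mul_Ioi hs hN).norm
  refine (hint_t.mul_prod hint_x).mono' (by fun_prop) ?_
  rw [Measure.prod_restrict]
  filter_upwards [ae_restrict_mem (measurableSet_Ioi.prod measurableSet_Ioc)]
    with ⟨t, x⟩ ⟨(ht : 0 < t), (hx : 0 < x), _⟩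
  dsimp only [Function.uncurry_apply_pair]
  have hdecay : rexp (-((M * x + N) * t)) ≤ rexp (-(N * t)) :=
    exp_le_exp.mpr (by nlinarith [mul_nonneg (mul_nonneg hM hx.le) ht.le])
  rw [norm_mul, norm_cpow_eq_rpow_re_of_pos hx, norm_cpow_mul_cexp_neg_mul ht,
    norm_cpow_mul_cexp_neg_mul ht, sub_re, one_re, mul_comm]
  gcongr

lemma integral_lowerGammaIntegral_mul_cpow_mul_cexp (hM : 0 ≤ M) (hN : 0 < N) {s₂ : ℂ}
    (h₁ : 0 < s₁.re) (hs : 0 < (s₁ + s₂).re) :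
    ∫ t in Ioi 0, lowerGammaIntegral M s₁ t * ((t : ℂ) ^ (s₂ - 1) * cexp (-(N * t))) =
      Gamma (s₁ + s₂) *
        ∫ x in (0 : ℝ)..1, (x : ℂ) ^ (s₁ - 1) * ((M * x + N : ℝ) : ℂ) ^ (-(s₁ + s₂)) := by
  have hsubst : ∀ t ∈ Ioi (0 : ℝ),
      lowerGammaIntegral M s₁ t * ((t : ℂ) ^ (s₂ - 1) * cexp (-(N * t))) =
        ∫ x in Ioc (0 : ℝ) 1, (x : ℂ) ^ (s₁ - 1) *
          ((t : ℂ) ^ (s₁ + s₂ - 1) * cexp (-((M * x + N : ℝ) * t))) := fun t (ht : 0 < t) => by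
    rw [lowerGammaIntegral_eq_cpow_mul ht, mul_assoc, ← integral_mul_const, ← integral_const_mul]
    refine setIntegral_congr_fun measurableSet_Ioc fun x _ => ?_
    have hexp : -(((M * x + N : ℝ) : ℂ) * t) = -(M * (x * t)) + -(N * t) := by push_cast; ring
    rw [add_sub_assoc, cpow_add _ _ (ofReal_ne_zero.mpr ht.ne'), hexp, Complex.exp_add]
    ring
  have hgamma : ∀ x ∈ Ioc (0 : ℝ) 1,
      ∫ t in Ioi (0 : ℝ), (x : ℂ) ^ (s₁ - 1) *
          ((t : ℂ) ^ (s₁ + s₂ - 1) * cexp (-((M * x + N : ℝ) * t))) =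
        Gamma (s₁ + s₂) * ((x : ℂ) ^ (s₁ - 1) * ((M * x + N : ℝ) : ℂ) ^ (-(s₁ + s₂))) :=
    fun x hx => by
      rw [integral_const_mul,
        integral_cpow_mul_cexp_neg_mul_Ioi_eq_cpow_neg hs (by nlinarith [hx.1])]
      ring
  rw [setIntegral_congr_fun measurableSet_Ioi hsubst,
    integral_integral_swap (integrable_cpow_mul_cpow_mul_cexp_prod hM hN h₁ hs),
    setIntegral_congr_fun measurableSet_Ioc hgamma, integral_const_mul,
    intervalIntegral.integral_of_le zero_le_one]

end PerTerm

section Coefficients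

lemma summable_succ_rpow_mul_rpow_neg {r c σ : ℝ} (hc : 0 ≤ c) (hσ : r + 1 < σ) :
    Summable fun m : ℕ => ((m : ℝ) + 1) ^ r * (c * ((m : ℝ) + 1)) ^ (-σ) := by
  have hp : Summable fun n : ℕ => (n : ℝ) ^ (r - σ) := summable_nat_rpow.mpr (by linarith)
  refine (((summable_nat_add_iff 1).mpr hp).mul_left (c ^ (-σ))).congr fun m => ?_
  have hm : (0 : ℝ) < m + 1 := by positivity
  rw [mul_rpow hc hm.le, mul_left_comm, ← rpow_add hm, Nat.cast_add_one, sub_eq_add_neg]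

lemma summable_succ_rpow_mul_exp_neg {c : ℝ} (hc : 0 < c) (r : ℝ) :
    Summable fun m : ℕ => ((m : ℝ) + 1) ^ r * rexp (-(c * ((m : ℝ) + 1))) := by
  have hpow := (summable_nat_add_iff 1).mpr (summable_pow_mul_exp_neg_nat_mul ⌈r⌉₊ hc)
  refine hpow.of_nonneg_of_le (fun m => by positivity) fun m => ?_
  rw [Nat.cast_add_one, neg_mul, ← rpow_natCast]
  gcongr
  · simp
  · exact Nat.le_ceil r

variable {a : ℕ → ℂ} {C r : ℝ}

lemma summable_norm_succ_mul_of_le_rpow (hA : ∀ n : ℕ, ‖a n‖ ≤ C * (n : ℝ) ^ r) {g : ℕ → ℝ}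
    (hg : ∀ m, 0 ≤ g m) (hsum : Summable fun m : ℕ => ((m : ℝ) + 1) ^ r * g m) :
    Summable fun m => ‖a (m + 1)‖ * g m := by
  refine (hsum.mul_left C).of_nonneg_of_le (fun m => mul_nonneg (norm_nonneg _) (hg m))
    fun m => ?_
  rw [← mul_assoc]
  exact mul_le_mul_of_nonneg_right (by simpa using hA (m + 1)) (hg m)

end Coefficients

section Expansion

variable {a : ℕ → ℂ} {C r : ℝ} {f : ℝ → ℂ}

lemma summable_norm_coeff_mul_cpow_mul_cexp (hA : ∀ n : ℕ, ‖a n‖ ≤ C * (n : ℝ) ^ r) (s : ℂ)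
    {t : ℝ} (ht : 0 < t) :
    Summable fun m : ℕ =>
      ‖a (m + 1) * ((t : ℂ) ^ (s - 1) * cexp (-((2 * π * (m + 1) : ℝ) * t)))‖ := by
  have hsum := (summable_succ_rpow_mul_exp_neg (by positivity : 0 < 2 * π * t) r).mul_left
    (t ^ (s.re - 1))
  have hg : Summable fun m : ℕ =>
      ((m : ℝ) + 1) ^ r * (t ^ (s.re - 1) * rexp (-(2 * π * (m + 1) * t))) :=
    hsum.congr fun m => by rw [mul_left_comm, mul_right_comm (2 * π)]
  refine (summable_norm_succ_mul_of_le_rpow hA (fun m => by positivity) hg).congr fun m => ?_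
  rw [norm_mul, norm_cpow_mul_cexp_neg_mul ht]

lemma hasSum_coeff_mul_cpow_mul_cexp (hA : ∀ n : ℕ, ‖a n‖ ≤ C * (n : ℝ) ^ r)
    (hf : ∀ t : ℝ, 0 < t → f t = ∑' m : ℕ, a (m + 1) * cexp (-(2 * π * (m + 1) * t)))
    (s : ℂ) {t : ℝ} (ht : 0 < t) :
    HasSum (fun m : ℕ => a (m + 1) * ((t : ℂ) ^ (s - 1) * cexp (-((2 * π * (m + 1) : ℝ) * t))))
      (f t * (t : ℂ) ^ (s - 1)) := by
  refine (summable_norm_coeff_mul_cpow_mul_cexp hA s ht).of_norm.hasSum_iff.mpr ?_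
  rw [hf t ht, ← tsum_mul_right]
  refine tsum_congr fun m => ?_
  push_cast
  ring


lemma summable_norm_coeff_mul_rpow_neg_mul_Gamma (hA : ∀ n : ℕ, ‖a n‖ ≤ C * (n : ℝ) ^ r) {σ : ℝ}
    (hσ : r + 1 < σ) :
    Summable fun m : ℕ => ‖a (m + 1)‖ * ((2 * π * (m + 1)) ^ (-σ) * Real.Gamma σ) :=
  ((summable_norm_succ_mul_of_le_rpow hA (fun m => by positivity)
    (summable_succ_rpow_mul_rpow_neg (c := 2 * π) (by positivity) hσ)).mul_right
      (Real.Gamma σ)).congr fun m => mul_assoc ..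

lemma hasSum_coeff_mul_lowerGammaIntegral (hA : ∀ n : ℕ, ‖a n‖ ≤ C * (n : ℝ) ^ r)
    (hf : ∀ t : ℝ, 0 < t → f t = ∑' m : ℕ, a (m + 1) * cexp (-(2 * π * (m + 1) * t)))
    {s : ℂ} (hs : 0 < s.re) (hσ : r + 1 < s.re) (T : ℝ) :
    HasSum (fun m : ℕ => a (m + 1) * lowerGammaIntegral (2 * π * (m + 1)) s T)
      (∫ t in Ioc 0 T, f t * (t : ℂ) ^ (s - 1)) := by
  have hμ (m : ℕ) : 0 < 2 * π * ((m : ℝ) + 1) := by positivity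
  have hint (m : ℕ) : IntegrableOn (fun t : ℝ =>
      a (m + 1) * ((t : ℂ) ^ (s - 1) * cexp (-((2 * π * (m + 1) : ℝ) * t)))) (Ioc 0 T) :=
    ((integrableOn_cpow_mul_cexp_neg_mul_Ioi hs (hμ m)).mono_set Ioc_subset_Ioi_self).const_mul _
  have hnorm (m : ℕ) : ∫ t in Ioc 0 T,
      ‖a (m + 1) * ((t : ℂ) ^ (s - 1) * cexp (-((2 * π * (m + 1) : ℝ) * t)))‖ ≤
        ‖a (m + 1)‖ * ((2 * π * (m + 1)) ^ (-s.re) * Real.Gamma s.re) := by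
    simp_rw [norm_mul (a _), integral_const_mul]
    exact mul_le_mul_of_nonneg_left
      (setIntegral_norm_cpow_mul_cexp_neg_mul_le hs (hμ m) Ioc_subset_Ioi_self) (norm_nonneg _)
  have hsum := hasSum_integral_of_summable_integral_norm hint
    ((summable_norm_coeff_mul_rpow_neg_mul_Gamma hA hσ).of_nonneg_of_le
      (fun m => integral_nonneg fun _ => norm_nonneg _) hnorm)
  simp_rw [integral_const_mul] at hsum
  rw [setIntegral_congr_fun measurableSet_Ioc
    fun t ht => (hasSum_coeff_mul_cpow_mul_cexp hA hf s ht.1).tsum_eq.symm]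
  exact hsum

lemma integral_norm_coeff_mul_cpow_mul_cexp_Ioi (n : ℕ) {s : ℂ} (hs : 0 < s.re) :
    ∫ t in Ioi (0 : ℝ), ‖a (n + 1) * ((t : ℂ) ^ (s - 1) * cexp (-((2 * π * (n + 1) : ℝ) * t)))‖ =
      ‖a (n + 1)‖ * ((2 * π * (n + 1)) ^ (-s.re) * Real.Gamma s.re) := by
  simp_rw [norm_mul (a _), integral_const_mul]
  rw [integral_norm_cpow_mul_cexp_neg_mul_Ioi hs (by positivity)]

lemma summable_norm_coeff_mul_lowerGammaIntegral (hA : ∀ n : ℕ, ‖a n‖ ≤ C * (n : ℝ) ^ r)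
    {s : ℂ} (hs : 0 < s.re) (hσ : r + 1 < s.re) (T : ℝ) :
    Summable fun m : ℕ => ‖a (m + 1) * lowerGammaIntegral (2 * π * (m + 1)) s T‖ :=
  (summable_norm_coeff_mul_rpow_neg_mul_Gamma hA hσ).of_nonneg_of_le (fun _ => norm_nonneg _)
    fun m => (norm_mul_le _ _).trans (mul_le_mul_of_nonneg_left
      (norm_lowerGammaIntegral_le hs (by positivity) T) (norm_nonneg _))

end Expansion

section DoubleExpansion

variable {a b : ℕ → ℂ} {C₁ r₁ C₂ r₂ : ℝ} {f₁ f₂ : ℝ → ℂ} {s₁ s₂ : ℂ}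

lemma hasSum_doubleMellin_integrand (hA : ∀ n : ℕ, ‖a n‖ ≤ C₁ * (n : ℝ) ^ r₁)
    (hB : ∀ n : ℕ, ‖b n‖ ≤ C₂ * (n : ℝ) ^ r₂)
    (hf₁ : ∀ t : ℝ, 0 < t → f₁ t = ∑' m : ℕ, a (m + 1) * cexp (-(2 * π * (m + 1) * t)))
    (hf₂ : ∀ t : ℝ, 0 < t → f₂ t = ∑' n : ℕ, b (n + 1) * cexp (-(2 * π * (n + 1) * t)))
    (h₁ : 0 < s₁.re) (hr₁ : r₁ + 1 < s₁.re) {t : ℝ} (ht : 0 < t) :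
    HasSum (fun p : ℕ × ℕ => a (p.1 + 1) * lowerGammaIntegral (2 * π * (p.1 + 1)) s₁ t *
        (b (p.2 + 1) * ((t : ℂ) ^ (s₂ - 1) * cexp (-((2 * π * (p.2 + 1) : ℝ) * t)))))
      ((∫ t₁ in Ioc 0 t, f₁ t₁ * (t₁ : ℂ) ^ (s₁ - 1)) * (f₂ t * (t : ℂ) ^ (s₂ - 1))) := by
  have hinner := hasSum_coeff_mul_lowerGammaIntegral hA hf₁ h₁ hr₁ t
  have houter := hasSum_coeff_mul_cpow_mul_cexp hB hf₂ s₂ ht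
  have hprod := summable_mul_of_summable_norm
    (summable_norm_coeff_mul_lowerGammaIntegral hA h₁ hr₁ t)
    (summable_norm_coeff_mul_cpow_mul_cexp hB s₂ ht)
  exact (hinner.mul houter hprod :)

lemma hasSum_integral_doubleMellin_integrand (hA : ∀ n : ℕ, ‖a n‖ ≤ C₁ * (n : ℝ) ^ r₁)
    (hB : ∀ n : ℕ, ‖b n‖ ≤ C₂ * (n : ℝ) ^ r₂)
    (hf₁ : ∀ t : ℝ, 0 < t → f₁ t = ∑' m : ℕ, a (m + 1) * cexp (-(2 * π * (m + 1) * t)))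
    (hf₂ : ∀ t : ℝ, 0 < t → f₂ t = ∑' n : ℕ, b (n + 1) * cexp (-(2 * π * (n + 1) * t)))
    (h₁ : 0 < s₁.re) (hr₁ : r₁ + 1 < s₁.re) (h₂ : 0 < s₂.re) (hr₂ : r₂ + 1 < s₂.re) :
    HasSum (fun p : ℕ × ℕ => a (p.1 + 1) * b (p.2 + 1) *
        ∫ t in Ioi 0, lowerGammaIntegral (2 * π * (p.1 + 1)) s₁ t *
          ((t : ℂ) ^ (s₂ - 1) * cexp (-((2 * π * (p.2 + 1) : ℝ) * t))))
      (∫ t in Ioi 0,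
        (∫ t₁ in Ioc 0 t, f₁ t₁ * (t₁ : ℂ) ^ (s₁ - 1)) * (f₂ t * (t : ℂ) ^ (s₂ - 1))) := by
  have hμ (m : ℕ) : 0 < 2 * π * ((m : ℝ) + 1) := by positivity
  set B₁ : ℕ → ℝ := fun m => ‖a (m + 1)‖ * ((2 * π * (m + 1)) ^ (-s₁.re) * Real.Gamma s₁.re)
  have hG (m : ℕ) (t : ℝ) : ‖a (m + 1) * lowerGammaIntegral (2 * π * (m + 1)) s₁ t‖ ≤ B₁ m :=
    (norm_mul_le _ _).trans (mul_le_mul_of_nonneg_left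
      (norm_lowerGammaIntegral_le h₁ (hμ m) t) (norm_nonneg _))
  have hK (n : ℕ) : IntegrableOn (fun t : ℝ =>
      b (n + 1) * ((t : ℂ) ^ (s₂ - 1) * cexp (-((2 * π * (n + 1) : ℝ) * t)))) (Ioi 0) :=
    (integrableOn_cpow_mul_cexp_neg_mul_Ioi h₂ (hμ n)).const_mul _
  have hint (p : ℕ × ℕ) : IntegrableOn (fun t : ℝ =>
      a (p.1 + 1) * lowerGammaIntegral (2 * π * (p.1 + 1)) s₁ t *
        (b (p.2 + 1) * ((t : ℂ) ^ (s₂ - 1) * cexp (-((2 * π * (p.2 + 1) : ℝ) * t))))) (Ioi 0) :=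
    (hK p.2).bdd_mul
      (continuous_const.mul (continuous_lowerGammaIntegral h₁ _)).aestronglyMeasurable
      (Eventually.of_forall (hG p.1))
  have hnorm (p : ℕ × ℕ) := (integral_norm_mul_le_of_norm_le (hK p.2) (hG p.1)).trans_eq
    (congrArg _ (integral_norm_coeff_mul_cpow_mul_cexp_Ioi p.2 h₂))
  have hB₁ : Summable B₁ := summable_norm_coeff_mul_rpow_neg_mul_Gamma hA hr₁
  have hB₂ := summable_norm_coeff_mul_rpow_neg_mul_Gamma hB hr₂
  have hsum := hasSum_integral_of_summable_integral_norm hint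
    ((hB₁.mul_of_nonneg hB₂ (fun m => by positivity) fun n => by positivity).of_nonneg_of_le
      (fun p => integral_nonneg fun _ => norm_nonneg _) hnorm)
  rw [setIntegral_congr_fun measurableSet_Ioi
    fun t ht => (hasSum_doubleMellin_integrand hA hB hf₁ hf₂ h₁ hr₁ ht).tsum_eq.symm]
  refine hsum.congr_fun fun p => ?_
  rw [← integral_const_mul]
  exact integral_congr_ae (Eventually.of_forall fun t => mul_mul_mul_comm ..)

end DoubleExpansion

lemma integral_lowerGammaIntegral_mul_cpow_mul_cexp_two_pi (m n : ℕ) {s₁ s₂ : ℂ}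
    (h₁ : 0 < s₁.re) (hs : 0 < (s₁ + s₂).re) :
    ∫ t in Ioi 0, lowerGammaIntegral (2 * π * (m + 1)) s₁ t *
        ((t : ℂ) ^ (s₂ - 1) * cexp (-((2 * π * (n + 1) : ℝ) * t))) =
      (2 * (π : ℂ)) ^ (-s₁ - s₂) * Gamma (s₁ + s₂) *
        ∫ x in (0 : ℝ)..1,
          (x : ℂ) ^ (s₁ - 1) * (((m + 1 : ℝ) * x + (n + 1 : ℝ) : ℝ) : ℂ) ^ (-(s₁ + s₂)) := by
  have hscale : ∀ x ∈ uIcc (0 : ℝ) 1,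
      (x : ℂ) ^ (s₁ - 1) * ((2 * π * (m + 1) * x + 2 * π * (n + 1) : ℝ) : ℂ) ^ (-(s₁ + s₂)) =
        (2 * (π : ℂ)) ^ (-s₁ - s₂) *
          ((x : ℂ) ^ (s₁ - 1) * (((m + 1 : ℝ) * x + (n + 1 : ℝ) : ℝ) : ℂ) ^ (-(s₁ + s₂))) := by
    intro x hx
    rw [uIcc_of_le zero_le_one] at hx
    have hpos : (0 : ℝ) ≤ (m + 1) * x + (n + 1) := by nlinarith [hx.1]
    rw [show 2 * π * (m + 1) * x + 2 * π * (n + 1) = (2 * π) * ((m + 1) * x + (n + 1)) by ring,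
      ofReal_mul, mul_cpow_ofReal_nonneg (by positivity) hpos, neg_add']
    push_cast
    ring
  rw [integral_lowerGammaIntegral_mul_cpow_mul_cexp (by positivity) (by positivity) h₁ hs,
    intervalIntegral.integral_congr hscale, intervalIntegral.integral_const_mul]
  ring

theorem double_mellin_eq_hypergeometric_series_general
    (a b : ℕ → ℂ)
    (ha : ∃ C r : ℝ, 0 < C ∧ ∀ n : ℕ, ‖a n‖ ≤ C * (n : ℝ) ^ r)
    (hb : ∃ C r : ℝ, 0 < C ∧ ∀ n : ℕ, ‖b n‖ ≤ C * (n : ℝ) ^ r)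
    (f₁ f₂ : ℝ → ℂ)
    (hf₁ : ∀ t : ℝ, 0 < t → f₁ t = ∑' m : ℕ, a (m + 1) * Complex.exp (-(2 * π * (m + 1) * t)))
    (hf₂ : ∀ t : ℝ, 0 < t → f₂ t = ∑' n : ℕ, b (n + 1) * Complex.exp (-(2 * π * (n + 1) * t))) :
    ∃ B : ℝ, ∀ s₁ s₂ : ℂ, B < s₁.re → B < s₂.re →
      (∫ t₂ in Set.Ioi (0 : ℝ),
          (∫ t₁ in Set.Ioc (0 : ℝ) t₂, f₁ t₁ * (t₁ : ℂ) ^ (s₁ - 1)) *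
            (f₂ t₂ * (t₂ : ℂ) ^ (s₂ - 1))) =
        (2 * (π : ℂ)) ^ (-s₁ - s₂) * Complex.Gamma (s₁ + s₂) *
          ∑' p : ℕ × ℕ,
            a (p.1 + 1) * b (p.2 + 1) *
              ∫ x in (0:ℝ)..1,
                (x : ℂ) ^ (s₁ - 1) *
                  ((((p.1 + 1 : ℝ)) * x + ((p.2 + 1 : ℝ)) : ℝ) : ℂ) ^ (-(s₁ + s₂)) := by
  obtain ⟨C₁, r₁, -, hA⟩ := ha
  obtain ⟨C₂, r₂, -, hB⟩ := hb
  refine ⟨max (max r₁ r₂ + 1) 0, fun s₁ s₂ hs₁ hs₂ => ?_⟩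
  obtain ⟨hr₁, h₁⟩ := max_lt_iff.mp hs₁
  obtain ⟨hr₂, h₂⟩ := max_lt_iff.mp hs₂
  replace hr₁ : r₁ + 1 < s₁.re := by linarith [le_max_left r₁ r₂]
  replace hr₂ : r₂ + 1 < s₂.re := by linarith [le_max_right r₁ r₂]
  rw [← (hasSum_integral_doubleMellin_integrand hA hB hf₁ hf₂ h₁ hr₁ h₂ hr₂).tsum_eq,
    ← tsum_mul_left]
  refine tsum_congr fun p => ?_
  rw [integral_lowerGammaIntegral_mul_cpow_mul_cexp_two_pi p.1 p.2 h₁ (by rw [add_re]; linarith)]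
  ring

/-- Double Mellin transform of two cuspidal `q`-expansions as a Dirichlet-type
series of hypergeometric integrals: for coefficients `a, b` of polynomial growth
(and vanishing constant terms), for `Re s₁, Re s₂` sufficiently large,
`∫_{0≤t₁≤t₂≤∞} f₁(it₁) f₂(it₂) t₁^{s₁-1} t₂^{s₂-1}
  = (2π)^{-s₁-s₂} Γ(s₁+s₂) ∑_{m,n≥1} a_m b_n ∫₀¹ x^{s₁-1}(mx+n)^{-(s₁+s₂)} dx`. -/
theorem double_mellin_eq_hypergeometric_series
    (k₁ k₂ : ℕ) (hk₁ : 1 ≤ k₁) (hk₂ : 1 ≤ k₂)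
    (a b : ℕ → ℂ)
    (ha : ∃ C r : ℝ, 0 < C ∧ ∀ n : ℕ, ‖a n‖ ≤ C * (n : ℝ) ^ r)
    (hb : ∃ C r : ℝ, 0 < C ∧ ∀ n : ℕ, ‖b n‖ ≤ C * (n : ℝ) ^ r)
    (f₁ f₂ : ℝ → ℂ)
    (hf₁ : ∀ t : ℝ, 0 < t → f₁ t = ∑' m : ℕ, a (m + 1) * Complex.exp (-(2 * π * (m + 1) * t)))
    (hf₂ : ∀ t : ℝ, 0 < t → f₂ t = ∑' n : ℕ, b (n + 1) * Complex.exp (-(2 * π * (n + 1) * t))) :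
    ∃ B : ℝ, ∀ s₁ s₂ : ℂ, B < s₁.re → B < s₂.re →
      (∫ t₂ in Set.Ioi (0 : ℝ),
          (∫ t₁ in Set.Ioc (0 : ℝ) t₂, f₁ t₁ * (t₁ : ℂ) ^ (s₁ - 1)) *
            (f₂ t₂ * (t₂ : ℂ) ^ (s₂ - 1))) =
        (2 * (π : ℂ)) ^ (-s₁ - s₂) * Complex.Gamma (s₁ + s₂) *
          ∑' p : ℕ × ℕ,
            a (p.1 + 1) * b (p.2 + 1) *
              ∫ x in (0:ℝ)..1,
                (x : ℂ) ^ (s₁ - 1) *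
                  ((((p.1 + 1 : ℝ)) * x + ((p.2 + 1 : ℝ)) : ℝ) : ℂ) ^ (-(s₁ + s₂)) :=
  double_mellin_eq_hypergeometric_series_general a b ha hb f₁ f₂ hf₁ hf₂
end
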